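/- arXiv:1606.04877 — 7 statements merged into one kernel-verified Lean document; each statement's English description precedes it below -/
import Mathlib

section
/- Let R be a commutative ring, N a positive integer, and for j ≥ 0 let h_j denote the j-th complete homogeneous symmetric polynomial in the variables X₁, …, X_N over R (the sum of all monomials of degree j), and for n ≥ 1 let p_n = X₁ⁿ + ⋯ + X_Nⁿ be the n-th power sum. Then for every integer k ≥ 1, k · h_k = Σ_{n=1}^{k} h_{k−n} · p_n as an identity in the polynomial ring R[X₁, …, X_N]. -/
/-!
Each monomial `X^μ` of degree `k` occurs in `k • h_k` with coefficient `k = ∑ᵢ mult_i(μ)`, which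
counts the pairs `(i, n)` with `1 ≤ n ≤ mult_i(μ)`. For fixed `(i, n)` the degree-`k` monomials
with `n ≤ mult_i(μ)` are exactly `X_i^n` times the monomials of degree `k - n`, so summing over
`(i, n)` instead gives `∑ₙ h_{k-n} p_n`.
-/

open MvPolynomial

/-- The `j`-th complete homogeneous symmetric polynomial in `N` variables over `R`:
the sum of all monomials of total degree `j`. -/
noncomputable def hsymPoly (R : Type*) [CommRing R] (N : ℕ) (j : ℕ) :
    MvPolynomial (Fin N) R :=
  ∑ m ∈ (Finset.univ : Finset (Fin N)).sym j,
    ((m : Multiset (Fin N)).map MvPolynomial.X).prod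

open Finset in
theorem Finset.card_filter_le_Icc_one {c k : ℕ} (hck : c ≤ k) : #{n ∈ Icc 1 k | n ≤ c} = c := by
  rw [show {n ∈ Icc 1 k | n ≤ c} = Icc 1 c by ext; simp only [mem_filter, mem_Icc]; omega, Nat.card_Icc, Nat.add_sub_cancel]

namespace MvPolynomial

open Finset

variable {σ R : Type*} [Fintype σ] [DecidableEq σ] [CommSemiring R]

theorem X_pow_mul_hsymm (i : σ) {n k : ℕ} (hnk : n ≤ k) :
    X i ^ n * hsymm σ R (k - n) =
      ∑ μ : Sym σ k with n ≤ μ.1.count i, (μ.1.map X).prod := by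
  have replicate_le {μ : Sym σ k} (hμ : μ ∈ ({μ | n ≤ μ.1.count i} : Finset _)) :
      Multiset.replicate n i ≤ μ.1 :=
    Multiset.le_count_iff_replicate_le.1 (mem_filter.1 hμ).2
  rw [hsymm, mul_sum]
  exact sum_bij' (fun m _ => Sym.mk (m.1 + Multiset.replicate n i) (by simp [hnk]))
    (fun μ hμ => Sym.mk (μ.1 - Multiset.replicate n i)
      (by rw [Multiset.card_sub (replicate_le hμ)]; simp))
    (fun m _ => mem_filter.2 ⟨mem_univ _, by simp⟩) (fun _ _ => mem_univ _)
    (fun m _ => Sym.coe_injective (by simp))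
    (fun μ hμ => Sym.coe_injective (tsub_add_cancel_of_le (replicate_le hμ)))
    (fun m _ => by simp [Multiset.prod_replicate, mul_comm])

theorem natCast_mul_hsymm (k : ℕ) :
    (k : MvPolynomial σ R) * hsymm σ R k = ∑ n ∈ Icc 1 k, hsymm σ R (k - n) * psum σ R n := by
  calc (k : MvPolynomial σ R) * hsymm σ R k
      = ∑ μ : Sym σ k, ∑ i, ∑ n ∈ Icc 1 k with n ≤ μ.1.count i, (μ.1.map X).prod := by
        rw [hsymm, mul_sum]
        refine sum_congr rfl fun μ _ => ?_
        have hcount (i : σ) : #{n ∈ Icc 1 k | n ≤ μ.1.count i} = μ.1.count i :=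
          card_filter_le_Icc_one ((μ.1.count_le_card i).trans_eq μ.2)
        simp only [sum_const, hcount, nsmul_eq_mul]
        rw [← sum_mul, ← Nat.cast_sum, Multiset.sum_count_eq_card fun i _ => mem_univ i, μ.2]
    _ = ∑ n ∈ Icc 1 k, ∑ i, ∑ μ : Sym σ k with n ≤ μ.1.count i, (μ.1.map X).prod := by
        simp only [sum_filter]
        rw [sum_comm_cycle]
        exact sum_congr rfl fun _ _ => sum_comm
    _ = ∑ n ∈ Icc 1 k, hsymm σ R (k - n) * psum σ R n := by
        refine sum_congr rfl fun n hn => ?_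
        simp only [← X_pow_mul_hsymm _ (mem_Icc.1 hn).2, psum, mul_sum, mul_comm]

end MvPolynomial

theorem hsymPoly_eq_hsymm (R : Type*) [CommRing R] (N j : ℕ) :
    hsymPoly R N j = hsymm (Fin N) R j := by
  rw [hsymPoly, hsymm, Finset.sym_univ]
  rfl

theorem newton_identity_hsym_general (R : Type*) [CommRing R] (N : ℕ)
    (k : ℕ) :
    (k : MvPolynomial (Fin N) R) * hsymPoly R N k =
      ∑ n ∈ Finset.Icc 1 k, hsymPoly R N (k - n) * MvPolynomial.psum (Fin N) R n := by
  simp only [hsymPoly_eq_hsymm, natCast_mul_hsymm]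

/-- **Newton–Girard identity** for complete homogeneous symmetric polynomials:
`k · h_k = ∑_{n=1}^{k} h_{k-n} p_n` where `p_n = X₁ⁿ + ⋯ + X_Nⁿ`. -/
theorem newton_identity_hsym (R : Type*) [CommRing R] (N : ℕ) (hN : 0 < N)
    (k : ℕ) (hk : 1 ≤ k) :
    (k : MvPolynomial (Fin N) R) * hsymPoly R N k =
      ∑ n ∈ Finset.Icc 1 k, hsymPoly R N (k - n) * MvPolynomial.psum (Fin N) R n :=
  newton_identity_hsym_general R N k
end

section
/- Let χ be a Dirichlet character mod q, and for each integer j ≥ 0 define F_{Ω_j}(s, χ) = Σ_{n ≥ 1, Ω(n) = j} χ(n) n^{−s} (so F_{Ω_0}(s, χ) = 1), and define F(s, χ) = Σ_{p prime} χ(p) p^{−s}. Then for every complex s with Re(s) > 1, all of these series converge absolutely, and for every integer k ≥ 1 one has k · F_{Ω_k}(s, χ) = Σ_{n=1}^{k} F_{Ω_{k−n}}(s, χ) · F(ns, χⁿ). -/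
open Complex

/-- The `n`-th term of the Dirichlet series `F_{Ω_j}(s, χ) = ∑_{n ≥ 1, Ω(n) = j} χ(n) n^{-s}`. -/
noncomputable def FOmegaTerm (q : ℕ) (χ : DirichletCharacter ℂ q) (s : ℂ) (j : ℕ) (n : ℕ) : ℂ :=
  if 1 ≤ n ∧ ArithmeticFunction.cardFactors n = j then χ (n : ZMod q) * (n : ℂ) ^ (-s) else 0

/-- The `p`-th term of `F(ns, χⁿ) = ∑_p χⁿ(p) p^{-ns}`. -/
noncomputable def FPrimeTerm (q : ℕ) (χ : DirichletCharacter ℂ q) (s : ℂ) (n : ℕ)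
    (p : Nat.Primes) : ℂ :=
  (χ ^ n) ((p : ℕ) : ZMod q) * ((p : ℕ) : ℂ) ^ (-((n : ℂ) * s))

/-!
`Ω N` is the number of prime powers dividing `N`, and `n ↦ χ(n)` is completely multiplicative.
Hence, splitting each prime power `p^j ∣ N` off as `N = d * p^j` with `Ω d = Ω N - j`, the sequence
`k · 1_{Ω = k} χ` is the sum over `1 ≤ j ≤ k` of the Dirichlet convolutions of `1_{Ω = k - j} χ`
with `χ` restricted to the `j`-th powers of primes. For `Re s > 1` all these L-series converge
absolutely, so convolution becomes multiplication, and the L-series of `χ` on `j`-th powers of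
primes is `F(js, χ^j)`, since `χ(p^j) = χ^j(p)`.
-/

open Finset LSeries ArithmeticFunction
open scoped ArithmeticFunction.Omega LSeries.notation

theorem Nat.card_divisors_filter_isPrimePow (n : ℕ) : #{d ∈ n.divisors | IsPrimePow d} = Ω n := by
  induction n using Nat.recOnPrimeCoprime with
  | zero => simp
  | prime_pow p k hp =>
    rw [card_filter, Nat.sum_divisors_prime_pow hp, sum_range_succ', cardFactors_apply_prime_pow hp]
    simp [isPrimePow_pow_iff, hp.isPrimePow, not_isPrimePow_one]
  | coprime a b ha hb hab iha ihb =>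
    rw [Nat.mul_divisors_filter_prime_pow hab, filter_union,
      card_union_of_disjoint (Nat.disjoint_divisors_filter_isPrimePow hab), iha, ihb,
      cardFactors_mul (by omega) (by omega)]

theorem LSeriesSummable.indicator {f : ℕ → ℂ} {s : ℂ} (hf : LSeriesSummable f s) (S : Set ℕ) :
    LSeriesSummable (S.indicator f) s :=
  .of_norm <| hf.norm.of_nonneg_of_le (fun _ ↦ norm_nonneg _) fun n ↦
    norm_term_le s (norm_indicator_le_norm_self f n)

noncomputable def cardFactorsPart (f : ℕ → ℂ) (j : ℕ) : ℕ → ℂ :=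
  {n | Ω n = j}.indicator f

noncomputable def primePowPart (f : ℕ → ℂ) (j : ℕ) : ℕ → ℂ :=
  {n | IsPrimePow n ∧ Ω n = j}.indicator f

section

variable {f : ℕ → ℂ}

theorem sum_cardFactorsPart_mul_primePowPart (k d e : ℕ) :
    ∑ j ∈ Icc 1 k, cardFactorsPart f (k - j) d * primePowPart f j e =
      if IsPrimePow e ∧ Ω d + Ω e = k then f d * f e else 0 := by
  by_cases he : IsPrimePow e
  · have hterm : ∀ j ∈ Icc 1 k, cardFactorsPart f (k - j) d * primePowPart f j e =
        if Ω e = j then (if Ω d + Ω e = k then f d * f e else 0) else 0 := by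
      intro j hj
      rw [mem_Icc] at hj
      simp only [cardFactorsPart, primePowPart, Set.indicator_apply, Set.mem_ofPred_eq, he,
        true_and]
      split_ifs <;> first | rfl | omega | simp
    have hΩe : 1 ≤ Ω e := cardFactors_pos_iff_one_lt.mpr he.one_lt
    rw [sum_congr rfl hterm, sum_ite_eq]
    simp only [mem_Icc, he, true_and]
    split_ifs <;> first | rfl | omega
  · simp [primePowPart, he]

theorem sum_convolution_cardFactorsPart_primePowPart (hf : ∀ m n, f (m * n) = f m * f n)
    (k : ℕ) :
    ∑ j ∈ Icc 1 k, cardFactorsPart f (k - j) ⍟ primePowPart f j =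
      (k : ℂ) • cardFactorsPart f k := by
  ext N
  have hsplit : ∀ x ∈ N.divisorsAntidiagonal,
      ∑ j ∈ Icc 1 k, cardFactorsPart f (k - j) x.1 * primePowPart f j x.2 =
        if IsPrimePow x.2 then cardFactorsPart f k N else 0 := by
    rintro ⟨d, e⟩ hde
    obtain ⟨rfl, hN⟩ := Nat.mem_divisorsAntidiagonal.mp hde
    rw [sum_cardFactorsPart_mul_primePowPart]
    simp only [cardFactorsPart, Set.indicator_apply, Set.mem_ofPred_eq,
      cardFactors_mul (left_ne_zero_of_mul hN) (right_ne_zero_of_mul hN), hf]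
    split_ifs <;> simp_all
  simp only [Finset.sum_apply, convolution_def, Pi.smul_apply, smul_eq_mul]
  rw [sum_comm, sum_congr rfl hsplit, Nat.sum_divisorsAntidiagonal' (fun _ e ↦
      if IsPrimePow e then cardFactorsPart f k N else 0), ← sum_filter, sum_const,
    Nat.card_divisors_filter_isPrimePow, nsmul_eq_mul]
  by_cases hN : Ω N = k
  · rw [hN]
  · simp [cardFactorsPart, hN]

theorem LSeriesSummable.cardFactorsPart {s : ℂ} (hs : LSeriesSummable f s) (j : ℕ) :
    LSeriesSummable (cardFactorsPart f j) s :=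
  hs.indicator _

theorem LSeriesSummable.primePowPart {s : ℂ} (hs : LSeriesSummable f s) (j : ℕ) :
    LSeriesSummable (primePowPart f j) s :=
  hs.indicator _

theorem LSeries_cardFactorsPart_recursion (hf : ∀ m n, f (m * n) = f m * f n) {s : ℂ}
    (hs : LSeriesSummable f s) (k : ℕ) :
    k * LSeries (cardFactorsPart f k) s =
      ∑ j ∈ Icc 1 k, LSeries (cardFactorsPart f (k - j)) s * LSeries (primePowPart f j) s := by
  rw [← LSeries_smul, ← sum_convolution_cardFactorsPart_primePowPart hf,
    LSeries_sum fun j _ ↦ (hs.cardFactorsPart _).convolution (hs.primePowPart j)]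
  exact sum_congr rfl fun j _ ↦ LSeries_convolution' (hs.cardFactorsPart _) (hs.primePowPart j)

theorem Nat.Primes.pow_left_injective {j : ℕ} (hj : j ≠ 0) :
    Function.Injective fun p : Nat.Primes ↦ (p : ℕ) ^ j :=
  (Nat.pow_left_injective hj).comp Subtype.val_injective

theorem tsum_primes_term_primePowPart {j : ℕ} (hj : j ≠ 0) (s : ℂ) :
    ∑' p : Nat.Primes, term (primePowPart f j) s ((p : ℕ) ^ j) = LSeries (primePowPart f j) s := by
  refine (Nat.Primes.pow_left_injective hj).tsum_eq fun n hn ↦ ?_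
  have hpart : primePowPart f j n ≠ 0 := fun h ↦ hn (by simp [term_def, h])
  obtain ⟨hprime, hΩ⟩ := Set.mem_of_indicator_ne_zero hpart
  obtain ⟨p, k, hp, -, rfl⟩ := (isPrimePow_nat_iff _).mp hprime
  rw [cardFactors_apply_prime_pow hp] at hΩ
  exact ⟨⟨p, hp⟩, by simp [hΩ]⟩

end

theorem FOmegaTerm_eq_term (q : ℕ) (χ : DirichletCharacter ℂ q) (s : ℂ) (j n : ℕ) :
    FOmegaTerm q χ s j n = term (cardFactorsPart ↗χ j) s n := by
  obtain rfl | hn := eq_or_ne n 0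
  · simp [FOmegaTerm]
  · simp [FOmegaTerm, term_of_ne_zero hn, cardFactorsPart, Set.indicator_apply,
      Nat.one_le_iff_ne_zero.mpr hn, cpow_neg, div_eq_mul_inv]

theorem FPrimeTerm_eq_term (q : ℕ) (χ : DirichletCharacter ℂ q) (s : ℂ) {n : ℕ} (hn : n ≠ 0)
    (p : Nat.Primes) :
    FPrimeTerm q χ s n p = term (primePowPart ↗χ n) s ((p : ℕ) ^ n) := by
  have hpow : IsPrimePow ((p : ℕ) ^ n) := (isPrimePow_pow_iff hn).mpr p.2.isPrimePow
  have hmem : (p : ℕ) ^ n ∈ {m | IsPrimePow m ∧ Ω m = n} := ⟨hpow, cardFactors_apply_prime_pow p.2⟩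
  rw [FPrimeTerm, term_of_ne_zero hpow.ne_zero, primePowPart, Set.indicator_of_mem hmem,
    MulChar.pow_apply' χ hn, cpow_neg, ← div_eq_mul_inv, natCast_cpow_natCast_mul]
  push_cast
  rw [map_pow]

/-- **Recursion for `F_{Ω_k}`** (Meng, eq. (2.5)): for `Re(s) > 1` all the series converge
absolutely and `k F_{Ω_k}(s, χ) = ∑_{n=1}^{k} F_{Ω_{k-n}}(s, χ) F(ns, χⁿ)`. -/
theorem FOmega_recursion (q : ℕ) (χ : DirichletCharacter ℂ q) (s : ℂ) (hs : 1 < s.re) :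
    (∀ j : ℕ, Summable (fun n : ℕ => ‖FOmegaTerm q χ s j n‖)) ∧
    (∀ n : ℕ, 1 ≤ n → Summable (fun p : Nat.Primes => ‖FPrimeTerm q χ s n p‖)) ∧
    (∀ k : ℕ, 1 ≤ k →
      (k : ℂ) * ∑' n : ℕ, FOmegaTerm q χ s k n =
        ∑ n ∈ Finset.Icc 1 k,
          (∑' m : ℕ, FOmegaTerm q χ s (k - n) m) * (∑' p : Nat.Primes, FPrimeTerm q χ s n p)) := by
  have hχ : LSeriesSummable ↗χ s := χ.LSeriesSummable_of_one_lt_re hs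
  have hmul : ∀ m n : ℕ, χ ((m * n : ℕ) : ZMod q) = χ m * χ n := fun m n ↦ by
    rw [Nat.cast_mul, map_mul]
  have hFOmega (j : ℕ) : ∑' n, FOmegaTerm q χ s j n = LSeries (cardFactorsPart ↗χ j) s := by
    simp only [FOmegaTerm_eq_term, LSeries]
  have hFPrime (n : ℕ) (hn : n ≠ 0) :
      ∑' p, FPrimeTerm q χ s n p = LSeries (primePowPart ↗χ n) s := by
    simp only [FPrimeTerm_eq_term q χ s hn, tsum_primes_term_primePowPart hn]
  refine ⟨fun j ↦ ?_, fun n hn ↦ ?_, fun k _ ↦ ?_⟩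
  · simpa only [FOmegaTerm_eq_term] using (hχ.cardFactorsPart j).norm
  · have hn0 : n ≠ 0 := Nat.one_le_iff_ne_zero.mp hn
    simpa only [FPrimeTerm_eq_term q χ s hn0, Function.comp_def] using
      (hχ.primePowPart n).norm.comp_injective (Nat.Primes.pow_left_injective hn0)
  · rw [hFOmega, LSeries_cardFactorsPart_recursion hmul hχ]
    refine sum_congr rfl fun n hn ↦ ?_
    rw [hFOmega, hFPrime n (Nat.one_le_iff_ne_zero.mp (mem_Icc.mp hn).1)]
end

section
/- Let χ be a Dirichlet character mod q, and for each integer j ≥ 0 define F_{ω_j}(s, χ) = Σ_{n ≥ 1, ω(n) = j} χ(n) n^{−s} (so F_{ω_0}(s, χ) = 1), and for each integer u ≥ 1 define F̃(s, χ; u) = Σ_{p prime} ( Σ_{m ≥ 1} χ(p^m) p^{−ms} )^u. Then for every complex s with Re(s) > 1, all of these series converge absolutely, and for every integer k ≥ 1 one has k · F_{ω_k}(s, χ) = Σ_{n=1}^{k} (−1)^{n−1} F_{ω_{k−n}}(s, χ) · F̃(s, χ; n). -/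
/-!
Write `f(n) = χ(n) n^{-s}`, `F_j = ∑_{ω(n) = j} f(n)` and `g_p = ∑_{a ≥ 0} f(p^{a+1})` for a
prime `p`. Fix `p` and split `F_j = A_j + B_j` according to whether `p ∤ n` or `p ∣ n`. Writing
`n = p^{a+1} m` with `p ∤ m` and using `ω(p^{a+1} m) = ω(m) + 1` gives `B_{j+1} = g_p A_j` and
`B_0 = 0`, hence `A_j = ∑_{i ≤ j} (-g_p)^i F_{j-i}`. On the other hand, summing `B_k` over all
primes counts each `n` with `ω(n) = k` exactly `k` times, so
`k F_k = ∑_p B_k = ∑_p g_p A_{k-1} = ∑_{i < k} (-1)^i F_{k-1-i} ∑_p g_p^{i+1}`.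
Everything converges absolutely because `∑ |f(n)|` does and `(p, a) ↦ p^{a+1}` is injective.
-/

open Complex

/-- The `n`-th term of the Dirichlet series `F_{ω_j}(s, χ) = ∑_{n ≥ 1, ω(n) = j} χ(n) n^{-s}`. -/
noncomputable def FomegaTerm (q : ℕ) (χ : DirichletCharacter ℂ q) (s : ℂ) (j : ℕ) (n : ℕ) : ℂ :=
  if 1 ≤ n ∧ ArithmeticFunction.cardDistinctFactors n = j then χ (n : ZMod q) * (n : ℂ) ^ (-s)
  else 0

/-- The inner series `∑_{m ≥ 1} χ(p^m) p^{-ms}` at a prime `p`. -/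
noncomputable def FtildeInner (q : ℕ) (χ : DirichletCharacter ℂ q) (s : ℂ) (p : Nat.Primes) : ℂ :=
  ∑' m : ℕ, χ ((((p : ℕ) ^ (m + 1) : ℕ)) : ZMod q) * (((p : ℕ) : ℂ)) ^ (-(((m : ℂ) + 1) * s))

/-- `F̃(s, χ; u) = ∑_p (∑_{m ≥ 1} χ(p^m) p^{-ms})^u`. -/
noncomputable def Ftilde (q : ℕ) (χ : DirichletCharacter ℂ q) (s : ℂ) (u : ℕ) : ℂ :=
  ∑' p : Nat.Primes, (FtildeInner q χ s p) ^ u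

open ArithmeticFunction
open scoped ArithmeticFunction.omega

theorem eq_sum_range_neg_pow_mul_of_add_mul_eq {R : Type*} [CommRing R] {a F : ℕ → R} {g : R}
    (h0 : a 0 = F 0) (hsucc : ∀ j, a (j + 1) + g * a j = F (j + 1)) (j : ℕ) :
    a j = ∑ i ∈ Finset.range (j + 1), (-g) ^ i * F (j - i) := by
  induction j with
  | zero => simp [h0]
  | succ j ih =>
    rw [Finset.sum_range_succ', eq_sub_of_add_eq (hsucc j), ih, Finset.mul_sum, sub_eq_add_neg,
      ← Finset.sum_neg_distrib, add_comm]
    simp only [pow_zero, one_mul, Nat.sub_zero, Nat.add_sub_add_right]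
    congr 1
    exact Finset.sum_congr rfl fun i _ => by ring

theorem hasSum_primes_ite_dvd {M : Type*} [AddCommMonoid M] [TopologicalSpace M] {n : ℕ}
    (hn : n ≠ 0) (x : M) :
    HasSum (fun p : Nat.Primes => if (p : ℕ) ∣ n then x else 0) (ω n • x) := by
  classical
  have hsupp : ∀ p ∉ n.primeFactors.subtype Nat.Prime, (if (p : ℕ) ∣ n then x else 0) = 0 :=
    fun p hp => if_neg fun hdvd =>
      hp (Finset.mem_subtype.mpr (Nat.mem_primeFactors.mpr ⟨p.2, hdvd, hn⟩))
  have hsum : ∑ p ∈ n.primeFactors.subtype Nat.Prime, (if (p : ℕ) ∣ n then x else 0) =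
      ω n • x := by
    rw [Finset.sum_congr rfl fun p hp => if_pos (Nat.dvd_of_mem_primeFactors
        (Finset.mem_subtype.mp hp)), Finset.sum_const, Finset.card_subtype,
      Finset.filter_true_of_mem fun p hp => Nat.prime_of_mem_primeFactors hp]
    rfl
  exact hsum ▸ hasSum_sum_of_ne_finset_zero hsupp

theorem summable_norm_indicator {α E : Type*} [SeminormedAddCommGroup E] {g : α → E}
    (hg : Summable (‖g ·‖)) (s : Set α) : Summable (‖s.indicator g ·‖) :=
  hg.of_nonneg_of_le (fun _ => norm_nonneg _) fun _ => norm_indicator_le_norm_self _ _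

theorem summable_norm_pow_of_summable_norm {ι R : Type*} [SeminormedRing R] {g : ι → R}
    (hg : Summable fun i => ‖g i‖) {u : ℕ} (hu : u ≠ 0) : Summable (‖g · ^ u‖) := by
  refine hg.of_norm_bounded_eventually ?_
  filter_upwards [hg.tendsto_cofinite_zero.eventually_le_const zero_lt_one] with i hi
  rw [norm_norm]
  exact (norm_pow_le' _ (Nat.pos_of_ne_zero hu)).trans (pow_le_of_le_one (norm_nonneg _) hi hu)

section OmegaPart

variable {M : Type*} [AddCommMonoid M] (f : ℕ → M) (p j : ℕ)

noncomputable def omegaPart : ℕ → M := {n | ω n = j}.indicator f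

noncomputable def omegaPartDvd : ℕ → M := {n | p ∣ n}.indicator (omegaPart f j)

noncomputable def omegaPartNotDvd : ℕ → M := {n | p ∣ n}ᶜ.indicator (omegaPart f j)

noncomputable def primePowerSum [TopologicalSpace M] : M := ∑' a, f (p ^ (a + 1))

theorem omegaPartNotDvd_add_omegaPartDvd :
    omegaPartNotDvd f p j + omegaPartDvd f p j = omegaPart f j :=
  (add_comm _ _).trans (Set.indicator_self_add_compl _ _)

variable {f p j}

theorem omegaPart_apply_zero (hf : f 0 = 0) : omegaPart f j 0 = 0 := by
  simp [omegaPart, Set.indicator_apply, hf]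

theorem omegaPartDvd_zero (hf : f 0 = 0) (hp : p ≠ 1) : omegaPartDvd f p 0 = 0 := by
  funext n
  simp only [omegaPartDvd, omegaPart, Set.indicator_apply, Set.mem_ofPred_eq,
    cardDistinctFactors_eq_zero, Pi.zero_apply]
  split_ifs with hdvd hn
  · interval_cases n
    · exact hf
    · exact absurd (Nat.dvd_one.mp hdvd) hp
  all_goals rfl

theorem cardDistinctFactors_smul_omegaPart (n : ℕ) :
    ω n • omegaPart f j n = j • omegaPart f j n := by
  by_cases h : ω n = j
  · rw [h]
  · simp [omegaPart, h]

theorem hasSum_primes_omegaPartDvd [TopologicalSpace M] (hf : f 0 = 0) (n : ℕ) :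
    HasSum (fun p : Nat.Primes => omegaPartDvd f p j n) (j • omegaPart f j n) := by
  rcases eq_or_ne n 0 with rfl | hn
  · simp [omegaPartDvd, omegaPart_apply_zero hf]
  · rw [← cardDistinctFactors_smul_omegaPart]
    convert hasSum_primes_ite_dvd hn (omegaPart f j n) using 2
    simp [omegaPartDvd, Set.indicator_apply]

end OmegaPart

section Normed

variable {E : Type*} [NormedAddCommGroup E] {f : ℕ → E}

theorem norm_omegaPartDvd (p j n : ℕ) :
    ‖omegaPartDvd f p j n‖ = omegaPartDvd (‖f ·‖) p j n := by
  simp only [omegaPartDvd, omegaPart, norm_indicator_eq_indicator_norm]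

theorem summable_norm_prime_pow (hf : Summable (‖f ·‖)) {p : ℕ} (hp : 2 ≤ p) :
    Summable fun a => ‖f (p ^ (a + 1))‖ :=
  hf.comp_injective fun _ _ h => Nat.succ_injective (Nat.pow_right_injective hp h)

theorem summable_norm_primePowerSum (hf : Summable (‖f ·‖)) :
    Summable fun p : Nat.Primes => ‖primePowerSum f p‖ := by
  have hprod : Summable fun x : Nat.Primes × ℕ => ‖f ((x.1 : ℕ) ^ (x.2 + 1))‖ :=
    hf.comp_injective fun x y h => by
      obtain ⟨hp, ha⟩ := Nat.Prime.pow_inj x.1.2 y.1.2 h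
      exact Prod.ext (Subtype.ext hp) ha
  exact hprod.prod.of_nonneg_of_le (fun _ => norm_nonneg _)
    fun p => norm_tsum_le_tsum_norm (summable_norm_prime_pow hf p.2.two_le)

variable [CompleteSpace E]

theorem summable_omegaPart (hf : Summable (‖f ·‖)) (j : ℕ) : Summable (omegaPart f j) :=
  (summable_norm_indicator hf _).of_norm

theorem tsum_omegaPart_eq_add (hf : Summable (‖f ·‖)) (p j : ℕ) :
    ∑' n, omegaPart f j n = ∑' n, omegaPartNotDvd f p j n + ∑' n, omegaPartDvd f p j n := by
  have hj := summable_norm_indicator hf {n | ω n = j}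
  have hA : Summable (omegaPartNotDvd f p j) := (summable_norm_indicator hj _).of_norm
  have hB : Summable (omegaPartDvd f p j) := (summable_norm_indicator hj _).of_norm
  rw [← hA.tsum_add hB, ← omegaPartNotDvd_add_omegaPartDvd]
  rfl

theorem summable_uncurry_omegaPartDvd (hf0 : f 0 = 0) (hf : Summable (‖f ·‖)) (j : ℕ) :
    Summable fun x : Nat.Primes × ℕ => omegaPartDvd f x.1 j x.2 := by
  have hsum (n : ℕ) := hasSum_primes_omegaPartDvd (f := (‖f ·‖)) (j := j) (by simp [hf0]) n
  have hj : Summable (omegaPart (‖f ·‖) j) := hf.indicator _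
  refine Summable.of_norm ((Equiv.prodComm _ _).summable_iff.mp ?_)
  refine (summable_prod_of_nonneg fun _ => norm_nonneg _).mpr ⟨fun n => ?_, ?_⟩
  · simpa only [Function.comp_apply, Equiv.prodComm_apply, Prod.swap_prod_mk,
      norm_omegaPartDvd] using (hsum n).summable
  · simp only [Equiv.prodComm_apply, Prod.swap_prod_mk, norm_omegaPartDvd, (hsum _).tsum_eq]
    exact hj.const_smul j

theorem tsum_primes_tsum_omegaPartDvd (hf0 : f 0 = 0) (hf : Summable (‖f ·‖)) (j : ℕ) :
    ∑' p : Nat.Primes, ∑' n, omegaPartDvd f p j n = j • ∑' n, omegaPart f j n := by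
  rw [← Summable.tsum_comm (f := fun (p : Nat.Primes) n => omegaPartDvd f p j n)
    (summable_uncurry_omegaPartDvd hf0 hf j), ← (summable_omegaPart hf j).tsum_const_smul]
  exact tsum_congr fun n => (hasSum_primes_omegaPartDvd hf0 n).tsum_eq

end Normed

theorem omegaPartDvd_prime_pow_mul {R : Type*} [Semiring R] {f : ArithmeticFunction R}
    (hf : f.IsMultiplicative) {p m : ℕ} (hp : p.Prime) (hm : ¬p ∣ m) (a j : ℕ) :
    omegaPartDvd f p (j + 1) (p ^ (a + 1) * m) = f (p ^ (a + 1)) * omegaPart f j m := by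
  have hcop : (p ^ (a + 1)).Coprime m := ((hp.coprime_iff_not_dvd).mpr hm).pow_left _
  have hω : ω (p ^ (a + 1) * m) = ω m + 1 := by
    rw [cardDistinctFactors_mul hcop, cardDistinctFactors_apply_prime_pow hp a.succ_ne_zero,
      add_comm]
  rw [omegaPartDvd, Set.indicator_of_mem (s := {n | p ∣ n})
    (dvd_mul_of_dvd_left (dvd_pow_self p a.succ_ne_zero) m)]
  simp only [omegaPart, Set.indicator_apply, Set.mem_ofPred_eq, hω, Nat.add_right_cancel_iff,
    hf.map_mul_of_coprime hcop, mul_ite, mul_zero]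

section Multiplicative

variable {R : Type*} [NormedCommRing R] [CompleteSpace R] {f : ArithmeticFunction R}

theorem tsum_omegaPartDvd_succ (hf : f.IsMultiplicative) (hfs : Summable (‖f ·‖)) {p : ℕ}
    (hp : p.Prime) (j : ℕ) :
    ∑' n, omegaPartDvd f p (j + 1) n = primePowerSum f p * ∑' n, omegaPartNotDvd f p j n := by
  let g : ℕ × ({n | p ∣ n}ᶜ : Set ℕ) → ℕ := fun x => p ^ (x.1 + 1) * x.2
  have hg : g.Injective := by
    rintro ⟨a, m, hm⟩ ⟨b, m', hm'⟩ h
    obtain rfl : m = m' := by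
      rw [← Nat.ordCompl_pow_mul_of_not_dvd (a + 1) hp hm,
        ← Nat.ordCompl_pow_mul_of_not_dvd (b + 1) hp hm']
      exact congrArg (fun n => n / p ^ n.factorization p) h
    have hm0 : 0 < m := Nat.pos_of_ne_zero fun h0 => hm (h0 ▸ dvd_zero p)
    have hab := Nat.pow_right_injective hp.two_le (Nat.eq_of_mul_eq_mul_right hm0 h)
    simp_all
  have hrange : Function.support (omegaPartDvd f p (j + 1)) ⊆ Set.range g := by
    intro n hn
    have hdvd : p ∣ n := by
      by_contra h
      exact hn (Set.indicator_of_notMem (s := {n | p ∣ n}) h _)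
    have hn0 : n ≠ 0 := by
      rintro rfl
      exact hn (by simp [omegaPartDvd, omegaPart_apply_zero f.map_zero])
    obtain ⟨e, m, hm, rfl⟩ := Nat.exists_eq_pow_mul_and_not_dvd hn0 p hp.ne_one
    obtain ⟨a, rfl⟩ : ∃ a, e = a + 1 :=
      Nat.exists_eq_add_one_of_ne_zero fun he => hm (by simpa [he] using hdvd)
    exact ⟨(a, ⟨m, hm⟩), rfl⟩
  have hS : Summable fun m : ({n | p ∣ n}ᶜ : Set ℕ) => ‖omegaPart f j m‖ :=
    (summable_norm_indicator hfs _).subtype _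
  rw [← hg.tsum_eq hrange, primePowerSum, omegaPartNotDvd, ← tsum_subtype,
    tsum_mul_tsum_of_summable_norm (summable_norm_prime_pow hfs hp.two_le) hS]
  exact tsum_congr fun x => omegaPartDvd_prime_pow_mul hf hp x.2.2 x.1 j

theorem tsum_omegaPartNotDvd_eq_sum (hf : f.IsMultiplicative) (hfs : Summable (‖f ·‖))
    {p : ℕ} (hp : p.Prime) (j : ℕ) :
    ∑' n, omegaPartNotDvd f p j n =
      ∑ i ∈ Finset.range (j + 1), (-primePowerSum f p) ^ i * ∑' n, omegaPart f (j - i) n :=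
  eq_sum_range_neg_pow_mul_of_add_mul_eq (a := fun j => ∑' n, omegaPartNotDvd f p j n)
    (F := fun j => ∑' n, omegaPart f j n)
    (by simp [tsum_omegaPart_eq_add hfs p 0, omegaPartDvd_zero f.map_zero hp.ne_one])
    (fun j => by rw [← tsum_omegaPartDvd_succ hf hfs hp j, ← tsum_omegaPart_eq_add hfs]) j

theorem mul_tsum_omegaPart_eq_sum (hf : f.IsMultiplicative) (hfs : Summable (‖f ·‖)) {k : ℕ}
    (hk : 1 ≤ k) :
    (k : R) * ∑' n, omegaPart f k n =
      ∑ n ∈ Finset.Icc 1 k, (-1) ^ (n - 1) * (∑' m, omegaPart f (k - n) m) *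
        ∑' p : Nat.Primes, primePowerSum f p ^ n := by
  obtain ⟨K, rfl⟩ := Nat.exists_eq_add_of_le' hk
  have hdvd (p : Nat.Primes) : ∑' n, omegaPartDvd f p (K + 1) n =
      ∑ i ∈ Finset.range (K + 1),
        (-1) ^ i * (∑' m, omegaPart f (K - i) m) * primePowerSum f p ^ (i + 1) := by
    rw [tsum_omegaPartDvd_succ hf hfs p.2, tsum_omegaPartNotDvd_eq_sum hf hfs p.2, Finset.mul_sum]
    exact Finset.sum_congr rfl fun i _ => by rw [neg_pow]; ring
  have hg := summable_norm_primePowerSum hfs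
  have hpow (i : ℕ) : Summable fun p : Nat.Primes => primePowerSum f p ^ (i + 1) :=
    (summable_norm_pow_of_summable_norm hg i.succ_ne_zero).of_norm
  rw [← nsmul_eq_mul, ← tsum_primes_tsum_omegaPartDvd f.map_zero hfs, tsum_congr hdvd,
    Summable.tsum_finsetSum fun i _ => (hpow i).mul_left _, ← Finset.Ico_add_one_right_eq_Icc,
    Finset.sum_Ico_eq_sum_range, Nat.add_sub_cancel]
  refine Finset.sum_congr rfl fun i _ => ?_
  rw [add_comm 1 i, Nat.add_sub_cancel, Nat.add_sub_add_right]
  exact (hpow i).tsum_mul_left _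

end Multiplicative

section DirichletCharacter

variable {q : ℕ} (χ : DirichletCharacter ℂ q) (s : ℂ)

noncomputable def dirichletTerm : ArithmeticFunction ℂ :=
  ⟨fun n => if n = 0 then 0 else χ n * (n : ℂ) ^ (-s), if_pos rfl⟩

theorem dirichletTerm_apply {n : ℕ} (hn : n ≠ 0) :
    dirichletTerm χ s n = χ n * (n : ℂ) ^ (-s) :=
  if_neg hn

theorem isMultiplicative_dirichletTerm : (dirichletTerm χ s).IsMultiplicative := by
  refine IsMultiplicative.iff_ne_zero.mpr ⟨by simp [dirichletTerm_apply], fun hm hn _ => ?_⟩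
  rw [dirichletTerm_apply χ s (mul_ne_zero hm hn), dirichletTerm_apply χ s hm,
    dirichletTerm_apply χ s hn, Nat.cast_mul (α := ℂ), natCast_mul_natCast_cpow, Nat.cast_mul,
    map_mul]
  ring

theorem norm_dirichletTerm_le (n : ℕ) : ‖dirichletTerm χ s n‖ ≤ (n : ℝ) ^ (-s.re) := by
  rcases eq_or_ne n 0 with rfl | hn
  · simp [dirichletTerm, Real.rpow_nonneg]
  · rw [dirichletTerm_apply χ s hn, norm_mul, norm_natCast_cpow_of_pos (Nat.pos_of_ne_zero hn),
      neg_re]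
    exact mul_le_of_le_one_left (by positivity) (χ.norm_le_one _)

theorem summable_norm_dirichletTerm (hs : 1 < s.re) : Summable (‖dirichletTerm χ s ·‖) :=
  (Real.summable_nat_rpow.mpr (by linarith)).of_nonneg_of_le (fun _ => norm_nonneg _)
    (norm_dirichletTerm_le χ s)

theorem FomegaTerm_eq_omegaPart (j : ℕ) :
    FomegaTerm q χ s j = omegaPart (dirichletTerm χ s) j := by
  funext n
  rcases eq_or_ne n 0 with rfl | hn
  · simp [FomegaTerm, omegaPart_apply_zero (dirichletTerm χ s).map_zero]
  · simp [FomegaTerm, omegaPart, Set.indicator_apply, dirichletTerm_apply χ s hn,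
      Nat.one_le_iff_ne_zero.mpr hn]

theorem dirichletTerm_pow_succ {p : ℕ} (hp : p ≠ 0) (m : ℕ) :
    dirichletTerm χ s (p ^ (m + 1)) =
      χ ((p ^ (m + 1) : ℕ) : ZMod q) * (p : ℂ) ^ (-(((m : ℂ) + 1) * s)) := by
  rw [dirichletTerm_apply χ s (pow_ne_zero _ hp),
    show -(((m : ℂ) + 1) * s) = ((m + 1 : ℕ) : ℂ) * -s by push_cast; ring,
    natCast_cpow_natCast_mul, Nat.cast_pow (α := ℂ)]

theorem FtildeInner_eq_primePowerSum (p : Nat.Primes) :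
    FtildeInner q χ s p = primePowerSum (dirichletTerm χ s) p :=
  tsum_congr fun m => (dirichletTerm_pow_succ χ s p.2.ne_zero m).symm

end DirichletCharacter

/-- **Recursion for `F_{ω_k}`** (Meng, eq. (2.11)): for `Re(s) > 1` all the series converge
absolutely and `k F_{ω_k}(s, χ) = ∑_{n=1}^{k} (-1)^{n-1} F_{ω_{k-n}}(s, χ) F̃(s, χ; n)`. -/
theorem Fomega_recursion (q : ℕ) (χ : DirichletCharacter ℂ q) (s : ℂ) (hs : 1 < s.re) :
    (∀ j : ℕ, Summable (fun n : ℕ => ‖FomegaTerm q χ s j n‖)) ∧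
    (∀ p : Nat.Primes,
      Summable (fun m : ℕ =>
        ‖χ ((((p : ℕ) ^ (m + 1) : ℕ)) : ZMod q) * (((p : ℕ) : ℂ)) ^ (-(((m : ℂ) + 1) * s))‖)) ∧
    (∀ u : ℕ, 1 ≤ u → Summable (fun p : Nat.Primes => ‖(FtildeInner q χ s p) ^ u‖)) ∧
    (∀ k : ℕ, 1 ≤ k →
      (k : ℂ) * ∑' n : ℕ, FomegaTerm q χ s k n =
        ∑ n ∈ Finset.Icc 1 k,
          (-1 : ℂ) ^ (n - 1) * (∑' m : ℕ, FomegaTerm q χ s (k - n) m) * Ftilde q χ s n) := by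
  have hf := isMultiplicative_dirichletTerm χ s
  have hfs := summable_norm_dirichletTerm χ s hs
  refine ⟨fun j => ?_, fun p => ?_, fun u hu => ?_, fun k hk => ?_⟩
  · rw [FomegaTerm_eq_omegaPart]
    exact summable_norm_indicator hfs _
  · simpa only [← dirichletTerm_pow_succ χ s p.2.ne_zero] using
      summable_norm_prime_pow hfs p.2.two_le
  · have hg := summable_norm_primePowerSum hfs
    simpa only [FtildeInner_eq_primePowerSum] using
      summable_norm_pow_of_summable_norm hg (Nat.one_le_iff_ne_zero.mp hu)
  · simp only [FomegaTerm_eq_omegaPart, Ftilde, FtildeInner_eq_primePowerSum]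
    exact mul_tsum_omegaPart_eq_sum hf hfs hk
end

section
/- Let χ be a non-principal Dirichlet character mod q and define logL(s, χ) = Σ_{p prime} Σ_{m ≥ 1} χ(p^m)/(m p^{ms}). Then: (i) the double series G̃₁(s) = Σ_{p prime} Σ_{m ≥ 3} c_m χ(p^m) p^{−ms}, where c_m = 1 − 1/m for odd m and c_m = 1 − 2/m for even m, converges absolutely for Re(s) > 1/3, and for every s with Re(s) > 1 one has Σ_{p prime} Σ_{j ≥ 1} χ(p^j) p^{−js} = logL(s, χ) + (1/2) · logL(2s, χ²) + G̃₁(s); (ii) the double series G̃₂(s) = Σ_{p prime} Σ_{m ≥ 3} d_m χ(p^m) p^{−ms}, where d_m = m − 1 for odd m and d_m = m − 1 − 2/m for even m, converges absolutely for Re(s) > 1/3, and for every s with Re(s) > 1 one has Σ_{p prime} Σ_{j ≥ 2} (j − 1) χ(p^j) p^{−js} = logL(2s, χ²) + G̃₂(s). -/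
open Complex

/-- The `(p, m)`-term `χ(p^m)/(m p^{ms})` (indexed by `m = pm.2 + 1 ≥ 1`) of the
double series defining `log L(s, χ)`. -/
noncomputable def logLTerm (q : ℕ) (χ : DirichletCharacter ℂ q) (s : ℂ)
    (pm : Nat.Primes × ℕ) : ℂ :=
  χ ((((pm.1 : ℕ) ^ (pm.2 + 1) : ℕ)) : ZMod q) /
    (((pm.2 : ℂ) + 1) * (((pm.1 : ℕ) : ℂ)) ^ (((pm.2 : ℂ) + 1) * s))

/-- `log L(s, χ) = ∑_p ∑_{m ≥ 1} χ(p^m)/(m p^{ms})`. -/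
noncomputable def logL (q : ℕ) (χ : DirichletCharacter ℂ q) (s : ℂ) : ℂ :=
  ∑' pm : Nat.Primes × ℕ, logLTerm q χ s pm

/-- `c_m = 1 - 1/m` for odd `m`, `c_m = 1 - 2/m` for even `m`. -/
noncomputable def cCoeff (m : ℕ) : ℂ := if Odd m then 1 - 1 / (m : ℂ) else 1 - 2 / (m : ℂ)

/-- `d_m = m - 1` for odd `m`, `d_m = m - 1 - 2/m` for even `m`. -/
noncomputable def dCoeff (m : ℕ) : ℂ :=
  if Odd m then (m : ℂ) - 1 else (m : ℂ) - 1 - 2 / (m : ℂ)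

/-- The `(p, m)`-term (with `m = pm.2 + 1`) of `G̃₁(s) = ∑_p ∑_{m ≥ 3} c_m χ(p^m) p^{-ms}`. -/
noncomputable def G1Term (q : ℕ) (χ : DirichletCharacter ℂ q) (s : ℂ)
    (pm : Nat.Primes × ℕ) : ℂ :=
  if 3 ≤ pm.2 + 1 then
    cCoeff (pm.2 + 1) * χ ((((pm.1 : ℕ) ^ (pm.2 + 1) : ℕ)) : ZMod q) *
      (((pm.1 : ℕ) : ℂ)) ^ (-((((pm.2 : ℂ) + 1)) * s))
  else 0

/-- The `(p, m)`-term (with `m = pm.2 + 1`) of `G̃₂(s) = ∑_p ∑_{m ≥ 3} d_m χ(p^m) p^{-ms}`. -/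
noncomputable def G2Term (q : ℕ) (χ : DirichletCharacter ℂ q) (s : ℂ)
    (pm : Nat.Primes × ℕ) : ℂ :=
  if 3 ≤ pm.2 + 1 then
    dCoeff (pm.2 + 1) * χ ((((pm.1 : ℕ) ^ (pm.2 + 1) : ℕ)) : ZMod q) *
      (((pm.1 : ℕ) : ℂ)) ^ (-((((pm.2 : ℂ) + 1)) * s))
  else 0

/-!
Write `P(p, m) = χ(p^m) p^{-ms}`. The term of `log L(s, χ)` at `(p, m)` is `P(p, m)/m`, and since
`χ²(p^k) p^{-2ks} = P(p, 2k)`, the term of `(1/2) log L(2s, χ²)` at `(p, k)` is `P(p, 2k)/m` with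
`m = 2k`. So `c_m` and `d_m` are exactly the coefficients left over at `(p, m)` after removing these
contributions, and they vanish for `m ≤ 2`. Since `|c_m| ≤ 1` and `|d_m| ≤ m`, the remainders are
dominated by `∑_p p^{-3σ} ∑_m m 2^{-(m-3)σ}`, which converges for `σ > 1/3`.
-/

open Set

/-- The summand `χ(p^m) p^{-ms}` (with `m = pm.2 + 1`) of `F̃(s, χ; 1)`. -/
noncomputable def primePowTerm (q : ℕ) (χ : DirichletCharacter ℂ q) (s : ℂ)
    (pm : Nat.Primes × ℕ) : ℂ :=
  χ ((((pm.1 : ℕ) ^ (pm.2 + 1) : ℕ)) : ZMod q) * (((pm.1 : ℕ) : ℂ)) ^ (-((((pm.2 : ℂ) + 1)) * s))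

/-- The indices `(p, n)` whose exponent `m = n + 1` is even. -/
def evenExponents : Set (Nat.Primes × ℕ) := {pm | Even (pm.2 + 1)}

section Summability

lemma Real.rpow_neg_le_rpow_neg_mul_two_rpow {x u v : ℝ} (hx : 2 ≤ x) (huv : u ≤ v) :
    x ^ (-v) ≤ x ^ (-u) * 2 ^ (u - v) := by
  rw [show -v = -u + (u - v) by ring, Real.rpow_add (by linarith : (0 : ℝ) < x)]
  exact mul_le_mul_of_nonneg_left (Real.rpow_le_rpow_of_nonpos (by norm_num) hx (by linarith))
    (by positivity)

/-- The dominating series is `∑_p p^{-(a+1)σ}` times `∑_n 2^{(a+1)σ} (n+1)^k 2^{-(n+1)σ}`. -/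
theorem summable_norm_of_norm_le_primePow {E : Type*} [SeminormedAddCommGroup E]
    {f : Nat.Primes × ℕ → E} (k a : ℕ) {σ : ℝ} (ha : 1 < ((a : ℝ) + 1) * σ)
    (hzero : ∀ pm : Nat.Primes × ℕ, pm.2 < a → f pm = 0)
    (hle : ∀ pm : Nat.Primes × ℕ, a ≤ pm.2 →
      ‖f pm‖ ≤ ((pm.2 : ℝ) + 1) ^ k * ((pm.1 : ℕ) : ℝ) ^ (-(((pm.2 : ℝ) + 1) * σ))) :
    Summable (fun pm => ‖f pm‖) := by
  have hσ : 0 < σ := pos_of_mul_pos_right (a := (a : ℝ) + 1) (by linarith) (by positivity)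
  set r : ℝ := (2 : ℝ) ^ (-σ)
  have hr0 : 0 < r := by positivity
  have hr1 : r < 1 := Real.rpow_lt_one_of_one_lt_of_neg (by norm_num) (by linarith)
  have hprimes : Summable (fun p : Nat.Primes => ((p : ℕ) : ℝ) ^ (-(((a : ℝ) + 1) * σ))) :=
    Nat.Primes.summable_rpow.mpr (by linarith)
  have hgeom : Summable
      (fun n : ℕ => (2 : ℝ) ^ (((a : ℝ) + 1) * σ) * (((n : ℝ) + 1) ^ k * r ^ (n + 1))) := by
    have h := (summable_nat_add_iff 1).mpr
      (summable_pow_mul_geometric_of_norm_lt_one (R := ℝ) k (r := r)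
        (by rwa [Real.norm_of_nonneg hr0.le]))
    simp only [Nat.cast_add, Nat.cast_one] at h
    exact h.mul_left _
  refine Summable.of_nonneg_of_le (fun _ => norm_nonneg _) (fun ⟨p, n⟩ => ?_)
    (hprimes.mul_of_nonneg hgeom (fun _ => by positivity) (fun _ => by positivity))
  rcases lt_or_ge n a with hn | hn
  · rw [hzero (p, n) hn, norm_zero]
    positivity
  have hp : (2 : ℝ) ≤ (p : ℕ) := by exact_mod_cast p.prop.two_le
  have hr_pow : r ^ (n + 1) = (2 : ℝ) ^ (-(((n : ℝ) + 1) * σ)) := by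
    rw [← Real.rpow_natCast, ← Real.rpow_mul (by norm_num)]
    push_cast
    ring_nf
  have hdecay := Real.rpow_neg_le_rpow_neg_mul_two_rpow hp
    (mul_le_mul_of_nonneg_right (by exact_mod_cast Nat.add_le_add_right hn 1) hσ.le :
      ((a : ℝ) + 1) * σ ≤ ((n : ℝ) + 1) * σ)
  calc ‖f (p, n)‖ ≤ ((n : ℝ) + 1) ^ k * ((p : ℕ) : ℝ) ^ (-(((n : ℝ) + 1) * σ)) := hle (p, n) hn
    _ ≤ ((n : ℝ) + 1) ^ k * (((p : ℕ) : ℝ) ^ (-(((a : ℝ) + 1) * σ)) *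
          2 ^ (((a : ℝ) + 1) * σ - ((n : ℝ) + 1) * σ)) :=
        mul_le_mul_of_nonneg_left hdecay (by positivity)
    _ = ((p : ℕ) : ℝ) ^ (-(((a : ℝ) + 1) * σ)) *
          ((2 : ℝ) ^ (((a : ℝ) + 1) * σ) * (((n : ℝ) + 1) ^ k * r ^ (n + 1))) := by
      rw [hr_pow, sub_eq_add_neg, Real.rpow_add (by norm_num)]
      ring

variable {q : ℕ} (χ : DirichletCharacter ℂ q)

lemma norm_primePowTerm_le (s : ℂ) (pm : Nat.Primes × ℕ) :
    ‖primePowTerm q χ s pm‖ ≤ ((pm.1 : ℕ) : ℝ) ^ (-(((pm.2 : ℝ) + 1) * s.re)) := by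
  rw [primePowTerm, norm_mul, norm_natCast_cpow_of_pos pm.1.prop.pos]
  have hre : (-(((pm.2 : ℂ) + 1) * s)).re = -(((pm.2 : ℝ) + 1) * s.re) := by
    simp [Complex.mul_re]
  rw [hre]
  exact mul_le_of_le_one_left (by positivity) (χ.norm_le_one _)

lemma logLTerm_eq_div (s : ℂ) (pm : Nat.Primes × ℕ) :
    logLTerm q χ s pm = primePowTerm q χ s pm / ((pm.2 : ℂ) + 1) := by
  rw [logLTerm, primePowTerm, Complex.cpow_neg]
  field_simp

lemma summable_norm_logLTerm {s : ℂ} (hs : 1 < s.re) :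
    Summable (fun pm => ‖logLTerm q χ s pm‖) := by
  refine summable_norm_of_norm_le_primePow 0 0 (by simpa using hs)
    (fun _ h => absurd h (Nat.not_lt_zero _)) (fun pm _ => ?_)
  have hm : 1 ≤ ‖(pm.2 : ℂ) + 1‖ := by
    rw [← Nat.cast_add_one, Complex.norm_natCast]
    simp
  rw [pow_zero, one_mul, logLTerm_eq_div, norm_div]
  exact (div_le_self (norm_nonneg _) hm).trans (norm_primePowTerm_le χ s pm)

lemma norm_cCoeff_le_one {m : ℕ} (hm : 2 ≤ m) : ‖cCoeff m‖ ≤ 1 := by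
  have hm' : (2 : ℝ) ≤ m := by exact_mod_cast hm
  have key : ∀ j : ℝ, 0 ≤ j → j ≤ 2 → ‖((1 - j / m : ℝ) : ℂ)‖ ≤ 1 := fun j hj0 hj2 => by
    have hjm : j / m ≤ 1 := (div_le_one (by linarith)).mpr (by linarith)
    rw [Complex.norm_real, Real.norm_of_nonneg (by linarith)]
    linarith [div_nonneg hj0 (by linarith : (0 : ℝ) ≤ m)]
  unfold cCoeff
  split_ifs
  · simpa using key 1 zero_le_one one_le_two
  · simpa using key 2 zero_le_two le_rfl

lemma norm_dCoeff_le {m : ℕ} (hm : 2 ≤ m) : ‖dCoeff m‖ ≤ m := by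
  have hm' : (2 : ℝ) ≤ m := by exact_mod_cast hm
  have key : ∀ j : ℝ, 0 ≤ j → j ≤ 2 → ‖((m - 1 - j / m : ℝ) : ℂ)‖ ≤ m := fun j hj0 hj2 => by
    have hjm : j / m ≤ 1 := (div_le_one (by linarith)).mpr (by linarith)
    rw [Complex.norm_real, Real.norm_of_nonneg (by linarith)]
    linarith [div_nonneg hj0 (by linarith : (0 : ℝ) ≤ m)]
  unfold dCoeff
  split_ifs
  · simpa using key 0 le_rfl zero_le_two
  · simpa using key 2 zero_le_two le_rfl

lemma G1Term_eq (s : ℂ) (pm : Nat.Primes × ℕ) :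
    G1Term q χ s pm = if 3 ≤ pm.2 + 1 then cCoeff (pm.2 + 1) * primePowTerm q χ s pm else 0 := by
  simp only [G1Term, primePowTerm, mul_assoc]

lemma G2Term_eq (s : ℂ) (pm : Nat.Primes × ℕ) :
    G2Term q χ s pm = if 3 ≤ pm.2 + 1 then dCoeff (pm.2 + 1) * primePowTerm q χ s pm else 0 := by
  simp only [G2Term, primePowTerm, mul_assoc]

lemma summable_norm_G1Term {s : ℂ} (hs : 1 / 3 < s.re) :
    Summable (fun pm => ‖G1Term q χ s pm‖) := by
  refine summable_norm_of_norm_le_primePow 0 2 (by norm_num; linarith)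
    (fun pm h => by rw [G1Term_eq, if_neg (by omega)]) (fun pm h => ?_)
  rw [G1Term_eq, if_pos (by omega), norm_mul, pow_zero, one_mul]
  exact (mul_le_of_le_one_left (norm_nonneg _) (norm_cCoeff_le_one (by omega))).trans
    (norm_primePowTerm_le χ s pm)

lemma summable_norm_G2Term {s : ℂ} (hs : 1 / 3 < s.re) :
    Summable (fun pm => ‖G2Term q χ s pm‖) := by
  refine summable_norm_of_norm_le_primePow 1 2 (by norm_num; linarith)
    (fun pm h => by rw [G2Term_eq, if_neg (by omega)]) (fun pm h => ?_)
  rw [G2Term_eq, if_pos (by omega), norm_mul, pow_one]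
  refine mul_le_mul ?_ (norm_primePowTerm_le χ s pm) (norm_nonneg _) (by positivity)
  exact_mod_cast norm_dCoeff_le (by omega : 2 ≤ pm.2 + 1)

end Summability

theorem tsum_indicator_evenExponents {E : Type*} [AddCommMonoid E] [TopologicalSpace E]
    (f : Nat.Primes × ℕ → E) :
    ∑' pm, evenExponents.indicator f pm = ∑' pk : Nat.Primes × ℕ, f (pk.1, 2 * pk.2 + 1) := by
  have hinj : Function.Injective (fun pk : Nat.Primes × ℕ => (pk.1, 2 * pk.2 + 1)) := by
    rintro ⟨p, k⟩ ⟨p', k'⟩ h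
    simp only [Prod.mk.injEq] at h
    exact Prod.ext h.1 (by omega)
  have hsupp : Function.support (evenExponents.indicator f) ⊆
      range (fun pk : Nat.Primes × ℕ => (pk.1, 2 * pk.2 + 1)) := by
    refine support_indicator_subset.trans fun ⟨p, n⟩ ⟨k, hk⟩ => ⟨(p, k - 1), ?_⟩
    simp only [Prod.mk.injEq, true_and]
    omega
  rw [← hinj.tsum_eq hsupp]
  exact tsum_congr fun pk =>
    indicator_of_mem (show (pk.1, 2 * pk.2 + 1) ∈ evenExponents from ⟨pk.2 + 1, by ring⟩) f

section Identities

variable {q : ℕ} (χ : DirichletCharacter ℂ q) (s : ℂ)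

lemma primePowTerm_two_mul_add_one (p : Nat.Primes) (k : ℕ) :
    primePowTerm q χ s (p, 2 * k + 1) = primePowTerm q (χ ^ 2) (2 * s) (p, k) := by
  have hχ : χ ((((p : ℕ) ^ (2 * k + 1 + 1) : ℕ)) : ZMod q) =
      (χ ^ 2) ((((p : ℕ) ^ (k + 1) : ℕ)) : ZMod q) := by
    rw [MulChar.pow_apply' χ two_ne_zero, ← map_pow, ← Nat.cast_pow, ← pow_mul]
    ring_nf
  rw [primePowTerm, primePowTerm, hχ]
  push_cast
  ring_nf

lemma logLTerm_two_mul_add_one (p : Nat.Primes) (k : ℕ) :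
    logLTerm q χ s (p, 2 * k + 1) = 1 / 2 * logLTerm q (χ ^ 2) (2 * s) (p, k) := by
  rw [logLTerm_eq_div, logLTerm_eq_div, primePowTerm_two_mul_add_one,
    show ((2 * k + 1 : ℕ) : ℂ) + 1 = 2 * ((k : ℂ) + 1) by push_cast; ring]
  have hk : (k : ℂ) + 1 ≠ 0 := Nat.cast_add_one_ne_zero k
  field_simp

lemma primePowTerm_eq_logLTerm_add (pm : Nat.Primes × ℕ) :
    primePowTerm q χ s pm =
      logLTerm q χ s pm + evenExponents.indicator (logLTerm q χ s) pm + G1Term q χ s pm := by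
  obtain ⟨p, n⟩ := pm
  rw [G1Term_eq, logLTerm_eq_div]
  rcases lt_or_ge n 2 with hn | hn
  · interval_cases n
    · simp [evenExponents]
    · rw [indicator_of_mem (show (p, 1) ∈ evenExponents from even_two), if_neg (by norm_num),
        logLTerm_eq_div]
      push_cast
      ring
  · have hm : (n : ℂ) + 1 ≠ 0 := Nat.cast_add_one_ne_zero n
    rw [if_pos (by omega)]
    rcases Nat.even_or_odd (n + 1) with h | h
    · rw [indicator_of_mem (show (p, n) ∈ evenExponents from h), cCoeff,
        if_neg (Nat.not_odd_iff_even.mpr h)]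
      simp only [logLTerm_eq_div]
      push_cast
      field_simp
      ring
    · rw [indicator_of_notMem (show (p, n) ∉ evenExponents from Nat.not_even_iff_odd.mpr h),
        cCoeff, if_pos h]
      push_cast
      field_simp
      ring

lemma natCast_mul_primePowTerm_eq (pm : Nat.Primes × ℕ) :
    (pm.2 : ℂ) * primePowTerm q χ s pm =
      evenExponents.indicator (fun pm => 2 * logLTerm q χ s pm) pm + G2Term q χ s pm := by
  obtain ⟨p, n⟩ := pm
  rw [G2Term_eq]
  rcases lt_or_ge n 2 with hn | hn
  · interval_cases n
    · simp [evenExponents]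
    · rw [indicator_of_mem (show (p, 1) ∈ evenExponents from even_two), if_neg (by norm_num),
        logLTerm_eq_div]
      push_cast
      ring
  · have hm : (n : ℂ) + 1 ≠ 0 := Nat.cast_add_one_ne_zero n
    rw [if_pos (by omega)]
    rcases Nat.even_or_odd (n + 1) with h | h
    · rw [indicator_of_mem (show (p, n) ∈ evenExponents from h), dCoeff,
        if_neg (Nat.not_odd_iff_even.mpr h)]
      simp only [logLTerm_eq_div]
      push_cast
      field_simp
      ring
    · rw [indicator_of_notMem (show (p, n) ∉ evenExponents from Nat.not_even_iff_odd.mpr h),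
        dCoeff, if_pos h]
      push_cast
      field_simp
      ring

end Identities

theorem Ftilde_logL_formulas_general (q : ℕ) (χ : DirichletCharacter ℂ q) :
    ((∀ s : ℂ, 1/3 < s.re → Summable (fun pm : Nat.Primes × ℕ => ‖G1Term q χ s pm‖)) ∧
      ∀ s : ℂ, 1 < s.re →
        ∑' pm : Nat.Primes × ℕ,
            χ ((((pm.1 : ℕ) ^ (pm.2 + 1) : ℕ)) : ZMod q) *
              (((pm.1 : ℕ) : ℂ)) ^ (-((((pm.2 : ℂ) + 1)) * s)) =
          logL q χ s + (1/2) * logL q (χ ^ 2) (2 * s) +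
            ∑' pm : Nat.Primes × ℕ, G1Term q χ s pm) ∧
    ((∀ s : ℂ, 1/3 < s.re → Summable (fun pm : Nat.Primes × ℕ => ‖G2Term q χ s pm‖)) ∧
      ∀ s : ℂ, 1 < s.re →
        ∑' pm : Nat.Primes × ℕ,
            (pm.2 : ℂ) * χ ((((pm.1 : ℕ) ^ (pm.2 + 1) : ℕ)) : ZMod q) *
              (((pm.1 : ℕ) : ℂ)) ^ (-((((pm.2 : ℂ) + 1)) * s)) =
          logL q (χ ^ 2) (2 * s) + ∑' pm : Nat.Primes × ℕ, G2Term q χ s pm) := by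
  refine ⟨⟨fun s hs => summable_norm_G1Term χ hs, fun s hs => ?_⟩,
    ⟨fun s hs => summable_norm_G2Term χ hs, fun s hs => ?_⟩⟩
  · have hL := (summable_norm_logLTerm χ hs).of_norm
    have hG := (summable_norm_G1Term χ (by linarith : 1 / 3 < s.re)).of_norm
    calc ∑' pm, primePowTerm q χ s pm
        = ∑' pm, (logLTerm q χ s pm + evenExponents.indicator (logLTerm q χ s) pm +
            G1Term q χ s pm) := tsum_congr (primePowTerm_eq_logLTerm_add χ s)
      _ = _ := by
        rw [(hL.add (hL.indicator _)).tsum_add hG, hL.tsum_add (hL.indicator _),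
          tsum_indicator_evenExponents]
        simp only [logLTerm_two_mul_add_one, tsum_mul_left, logL]
  · have hL2 := ((summable_norm_logLTerm χ hs).of_norm).mul_left 2
    have hG := (summable_norm_G2Term χ (by linarith : 1 / 3 < s.re)).of_norm
    calc ∑' pm : Nat.Primes × ℕ, (pm.2 : ℂ) * χ ((((pm.1 : ℕ) ^ (pm.2 + 1) : ℕ)) : ZMod q) *
          (((pm.1 : ℕ) : ℂ)) ^ (-((((pm.2 : ℂ) + 1)) * s))
        = ∑' pm, (evenExponents.indicator (fun pm => 2 * logLTerm q χ s pm) pm +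
            G2Term q χ s pm) :=
          tsum_congr fun pm => (mul_assoc _ _ _).trans (natCast_mul_primePowTerm_eq χ s pm)
      _ = _ := by
        rw [(hL2.indicator _).tsum_add hG, tsum_indicator_evenExponents]
        simp only [logLTerm_two_mul_add_one, ← mul_assoc,
          mul_one_div_cancel (two_ne_zero' ℂ), one_mul, logL]

/-- **Formulas (2.8) and (2.9)** (Meng): for a non-principal character `χ`,
`F̃(s, χ; 1) = log L(s, χ) + (1/2) log L(2s, χ²) + G̃₁(s)` and
`F̃(s, χ; 2) = log L(2s, χ²) + G̃₂(s)`, the series `G̃₁, G̃₂` converging absolutely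
for `Re(s) > 1/3`. -/
theorem Ftilde_logL_formulas (q : ℕ) [NeZero q] (χ : DirichletCharacter ℂ q)
    (hχ : χ ≠ 1) :
    ((∀ s : ℂ, 1/3 < s.re → Summable (fun pm : Nat.Primes × ℕ => ‖G1Term q χ s pm‖)) ∧
      ∀ s : ℂ, 1 < s.re →
        ∑' pm : Nat.Primes × ℕ,
            χ ((((pm.1 : ℕ) ^ (pm.2 + 1) : ℕ)) : ZMod q) *
              (((pm.1 : ℕ) : ℂ)) ^ (-((((pm.2 : ℂ) + 1)) * s)) =
          logL q χ s + (1/2) * logL q (χ ^ 2) (2 * s) +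
            ∑' pm : Nat.Primes × ℕ, G1Term q χ s pm) ∧
    ((∀ s : ℂ, 1/3 < s.re → Summable (fun pm : Nat.Primes × ℕ => ‖G2Term q χ s pm‖)) ∧
      ∀ s : ℂ, 1 < s.re →
        ∑' pm : Nat.Primes × ℕ,
            (pm.2 : ℂ) * χ ((((pm.1 : ℕ) ^ (pm.2 + 1) : ℕ)) : ZMod q) *
              (((pm.1 : ℕ) : ℂ)) ^ (-((((pm.2 : ℂ) + 1)) * s)) =
          logL q (χ ^ 2) (2 * s) + ∑' pm : Nat.Primes × ℕ, G2Term q χ s pm) :=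
  Ftilde_logL_formulas_general q χ
end

section
/- For all integers k ≥ 1 and m ≥ 0 there exists a constant C = C(m, k) > 0 such that for every real x ≥ 16 and with δ = 1/10: ∫₀^δ |(log σ − iπ)^k − (log σ + iπ)^k| · σ^m · x^{−σ} dσ ≤ C · (log log x)^{k−1} / (log x)^{m+1}. -/
/-!
With `L = log x`, both `log σ ± iπ` have modulus at most `π - log σ` on `(0, 1]`, so the
integrand is at most `2πk (π - log σ)^(k-1) σ^m e^{-Lσ}`. Writing
`-log σ = log L + log (1/(Lσ))`, the first part contributes `(log L)^(k-1)`, and the second is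
only large for `σ < 1/L`, where its `(k-1)`-st power is dominated by `(Lσ)^(-1/2)`. Both resulting
majorants `σ^(s-1) e^{-Lσ}` integrate over `(0, ∞)` to `Γ(s) / L^s`, and the factor `L^(-1/2)`
turns the second one into a multiple of `1 / L^(m+1)` as well.
-/

open Complex Real

open MeasureTheory Set

lemma norm_pow_sub_pow_le {R : Type*} [NormedCommRing R] [NormOneClass R] (a b : R) (k : ℕ)
    {r : ℝ} (ha : ‖a‖ ≤ r) (hb : ‖b‖ ≤ r) : ‖a ^ k - b ^ k‖ ≤ k * r ^ (k - 1) * ‖a - b‖ := by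
  have hr : 0 ≤ r := (norm_nonneg a).trans ha
  have hterm : ∀ i ∈ Finset.range k, ‖a ^ i * b ^ (k - 1 - i)‖ ≤ r ^ (k - 1) := fun i hi => by
    calc ‖a ^ i * b ^ (k - 1 - i)‖ ≤ ‖a‖ ^ i * ‖b‖ ^ (k - 1 - i) :=
          (norm_mul_le _ _).trans (by gcongr <;> exact norm_pow_le _ _)
      _ ≤ r ^ i * r ^ (k - 1 - i) := by gcongr
      _ = r ^ (k - 1) := by
        rw [← pow_add, Nat.add_sub_cancel' (Nat.le_sub_one_of_lt (Finset.mem_range.mp hi))]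
  rw [← geom_sum₂_mul]
  refine (norm_mul_le _ _).trans (mul_le_mul_of_nonneg_right ?_ (norm_nonneg _))
  simpa using norm_sum_le_of_le _ hterm

lemma norm_ofReal_sub_pi_mul_I_pow_sub_le (k : ℕ) (t : ℝ) :
    ‖((t : ℂ) - π * I) ^ k - ((t : ℂ) + π * I) ^ k‖ ≤ 2 * π * k * (|t| + π) ^ (k - 1) := by
  have hπI : ‖(π : ℂ) * I‖ = π := by simp [abs_of_pos pi_pos]
  have hsub : ‖(t : ℂ) - π * I‖ ≤ |t| + π :=
    (norm_sub_le _ _).trans_eq (by rw [norm_real, norm_eq_abs, hπI])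
  have hadd : ‖(t : ℂ) + π * I‖ ≤ |t| + π :=
    (norm_add_le _ _).trans_eq (by rw [norm_real, norm_eq_abs, hπI])
  have hdiff : ‖((t : ℂ) - π * I) - ((t : ℂ) + π * I)‖ = 2 * π := by
    rw [show ((t : ℂ) - π * I) - ((t : ℂ) + π * I) = -(2 * (π * I)) by ring, norm_neg, norm_mul,
      hπI, Complex.norm_ofNat]
  have := norm_pow_sub_pow_le _ _ k hsub hadd
  rw [hdiff] at this
  linarith

lemma log_pow_le_mul_rpow (n : ℕ) {v ε : ℝ} (hv : 1 ≤ v) (hε : 0 < ε) :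
    Real.log v ^ n ≤ (n / ε) ^ n * v ^ ε := by
  rcases Nat.eq_zero_or_pos n with rfl | hn
  · simpa using one_le_rpow hv hε.le
  have hεn : 0 < ε / n := by positivity
  calc Real.log v ^ n ≤ (v ^ (ε / n) / (ε / n)) ^ n :=
        pow_le_pow_left₀ (log_nonneg hv) (log_le_rpow_div (by linarith) hεn) n
    _ = (n / ε) ^ n * v ^ ε := by
      rw [div_eq_mul_inv, mul_pow, ← rpow_natCast (v ^ _), ← rpow_mul (by linarith), inv_div,
        mul_comm]
      field_simp

lemma pi_sub_log_pow_le (n : ℕ) {L σ : ℝ} (hL0 : 0 < L) (hL : 1 ≤ Real.log L) (hσ0 : 0 < σ)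
    (hσ1 : σ ≤ 1) :
    (π - Real.log σ) ^ n ≤
      2 ^ (n - 1) * (((π + 1) * Real.log L) ^ n + (2 * n) ^ n * (L * σ) ^ (-(1 / 2 : ℝ))) := by
  set A := (π + 1) * Real.log L
  have hA : π + Real.log L ≤ A := by nlinarith [pi_pos]
  have hlogσ : Real.log σ ≤ 0 := log_nonpos hσ0.le hσ1
  have hLσ : 0 < L * σ := mul_pos hL0 hσ0
  have hlogLσ : Real.log (L * σ) = Real.log L + Real.log σ := log_mul hL0.ne' hσ0.ne'
  have hB : 0 ≤ (2 * n : ℝ) ^ n * (L * σ) ^ (-(1 / 2 : ℝ)) := by positivity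
  rcases le_or_gt 1 (L * σ) with hge | hlt
  · have hle : π - Real.log σ ≤ A := by linarith [log_nonneg hge]
    calc (π - Real.log σ) ^ n ≤ A ^ n := pow_le_pow_left₀ (by linarith [pi_pos]) hle n
      _ ≤ 1 * (A ^ n + (2 * n) ^ n * (L * σ) ^ (-(1 / 2 : ℝ))) := by linarith
      _ ≤ _ := by gcongr; exact one_le_pow₀ one_le_two
  · set v := (L * σ)⁻¹
    have hv : 1 ≤ v := (one_le_inv₀ hLσ).mpr hlt.le
    have hlogv : Real.log v = -Real.log L - Real.log σ := by
      rw [Real.log_inv, hlogLσ]; ring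
    have hvpow : Real.log v ^ n ≤ (2 * n) ^ n * (L * σ) ^ (-(1 / 2 : ℝ)) := by
      have := log_pow_le_mul_rpow n hv one_half_pos
      rwa [inv_rpow hLσ.le, ← rpow_neg hLσ.le, show (n : ℝ) / (1 / 2) = 2 * n by ring] at this
    calc (π - Real.log σ) ^ n ≤ (A + Real.log v) ^ n :=
          pow_le_pow_left₀ (by linarith [pi_pos]) (by linarith) n
      _ ≤ 2 ^ (n - 1) * (A ^ n + Real.log v ^ n) :=
          add_pow_le (by linarith [pi_pos]) (log_nonneg hv) n
      _ ≤ _ := by gcongr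

lemma norm_log_sub_pi_mul_I_pow_sub_mul_le (k m : ℕ) {L σ : ℝ} (hL0 : 0 < L)
    (hL : 1 ≤ Real.log L) (hσ0 : 0 < σ) (hσ1 : σ ≤ 1) :
    ‖((Real.log σ : ℂ) - π * I) ^ k - ((Real.log σ : ℂ) + π * I) ^ k‖ * σ ^ m * rexp (-(L * σ)) ≤
      2 * π * k * 2 ^ (k - 1 - 1) * ((π + 1) * Real.log L) ^ (k - 1) *
          (σ ^ ((m + 1 : ℝ) - 1) * rexp (-(L * σ))) +
        2 * π * k * 2 ^ (k - 1 - 1) * (2 * (k - 1 : ℕ)) ^ (k - 1) * L ^ (-(1 / 2 : ℝ)) *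
          (σ ^ ((m + 1 / 2 : ℝ) - 1) * rexp (-(L * σ))) := by
  have habs : |Real.log σ| + π = π - Real.log σ := by
    rw [abs_of_nonpos (log_nonpos hσ0.le hσ1)]; ring
  have hσm : σ ^ m = σ ^ ((m + 1 : ℝ) - 1) := by
    rw [add_sub_cancel_right, rpow_natCast]
  have hsplit :
      (L * σ) ^ (-(1 / 2 : ℝ)) * σ ^ m = L ^ (-(1 / 2 : ℝ)) * σ ^ ((m + 1 / 2 : ℝ) - 1) := by
    rw [mul_rpow hL0.le hσ0.le, mul_assoc, ← rpow_natCast, ← rpow_add hσ0]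
    ring_nf
  have hw : 0 ≤ σ ^ m * rexp (-(L * σ)) := by positivity
  calc ‖((Real.log σ : ℂ) - π * I) ^ k - ((Real.log σ : ℂ) + π * I) ^ k‖ * σ ^ m * rexp (-(L * σ))
      ≤ 2 * π * k * (π - Real.log σ) ^ (k - 1) * (σ ^ m * rexp (-(L * σ))) := by
        rw [mul_assoc, ← habs]
        exact mul_le_mul_of_nonneg_right (norm_ofReal_sub_pi_mul_I_pow_sub_le k _) hw
    _ ≤ 2 * π * k * (2 ^ (k - 1 - 1) * (((π + 1) * Real.log L) ^ (k - 1) +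
          (2 * (k - 1 : ℕ)) ^ (k - 1) * (L * σ) ^ (-(1 / 2 : ℝ)))) * (σ ^ m * rexp (-(L * σ))) := by
        gcongr
        exact pi_sub_log_pow_le (k - 1) hL0 hL hσ0 hσ1
    _ = _ := by
        rw [← hσm]
        linear_combination (2 * π * k * 2 ^ (k - 1 - 1) * (2 * (k - 1 : ℕ) : ℝ) ^ (k - 1) *
          rexp (-(L * σ))) * hsplit

lemma integrableOn_rpow_mul_exp_neg_mul {a r : ℝ} (ha : 0 < a) (hr : 0 < r) :
    IntegrableOn (fun t : ℝ ↦ t ^ (a - 1) * rexp (-(r * t))) (Ioi 0) := by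
  simpa [neg_mul] using integrableOn_rpow_mul_exp_neg_mul_rpow (p := 1) (by linarith) one_pos hr

lemma setIntegral_Ioc_rpow_mul_exp_neg_mul_le {a r : ℝ} (δ : ℝ) (ha : 0 < a) (hr : 0 < r) :
    ∫ t in Ioc 0 δ, t ^ (a - 1) * rexp (-(r * t)) ≤ Real.Gamma a / r ^ a := by
  calc ∫ t in Ioc 0 δ, t ^ (a - 1) * rexp (-(r * t))
      ≤ ∫ t in Ioi 0, t ^ (a - 1) * rexp (-(r * t)) := by
        refine setIntegral_mono_set (integrableOn_rpow_mul_exp_neg_mul ha hr) ?_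
          Ioc_subset_Ioi_self.eventuallyLE
        filter_upwards [ae_restrict_mem measurableSet_Ioi] with t ht
        exact mul_nonneg (rpow_nonneg ht.le _) (exp_nonneg _)
    _ = Real.Gamma a / r ^ a := by
        rw [integral_rpow_mul_exp_neg_mul_Ioi ha hr, one_div, inv_rpow hr.le, inv_mul_eq_div]

lemma intervalIntegral_le_of_le_rpow_mul_exp_add {f : ℝ → ℝ} {δ r a b P Q : ℝ} (hδ : 0 ≤ δ)
    (hr : 0 < r) (ha : 0 < a) (hb : 0 < b) (hP : 0 ≤ P) (hQ : 0 ≤ Q)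
    (hf0 : ∀ t ∈ Ioc 0 δ, 0 ≤ f t)
    (hf : ∀ t ∈ Ioc 0 δ,
      f t ≤ P * (t ^ (a - 1) * rexp (-(r * t))) + Q * (t ^ (b - 1) * rexp (-(r * t)))) :
    ∫ t in 0..δ, f t ≤ P * (Real.Gamma a / r ^ a) + Q * (Real.Gamma b / r ^ b) := by
  have hsub : Ioc (0 : ℝ) δ ⊆ Ioi 0 := Ioc_subset_Ioi_self
  have hia := (integrableOn_rpow_mul_exp_neg_mul ha hr).mono_set hsub
  have hib := (integrableOn_rpow_mul_exp_neg_mul hb hr).mono_set hsub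
  rw [intervalIntegral.integral_of_le hδ]
  calc ∫ t in Ioc 0 δ, f t
      ≤ ∫ t in Ioc 0 δ,
          P * (t ^ (a - 1) * rexp (-(r * t))) + Q * (t ^ (b - 1) * rexp (-(r * t))) :=
        integral_mono_of_nonneg ((ae_restrict_mem measurableSet_Ioc).mono hf0)
          ((hia.const_mul P).add (hib.const_mul Q)) ((ae_restrict_mem measurableSet_Ioc).mono hf)
    _ = P * (∫ t in Ioc 0 δ, t ^ (a - 1) * rexp (-(r * t))) +
          Q * (∫ t in Ioc 0 δ, t ^ (b - 1) * rexp (-(r * t))) := by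
        rw [integral_add (hia.const_mul P) (hib.const_mul Q), integral_const_mul,
          integral_const_mul]
    _ ≤ P * (Real.Gamma a / r ^ a) + Q * (Real.Gamma b / r ^ b) := by
        gcongr <;> exact setIntegral_Ioc_rpow_mul_exp_neg_mul_le δ ‹_› hr

lemma exists_integral_norm_log_sub_pi_mul_I_pow_sub_mul_rpow_le (k m : ℕ) :
    ∃ K, 0 ≤ K ∧ ∀ x δ : ℝ, 1 < x → 1 ≤ Real.log (Real.log x) → 0 ≤ δ → δ ≤ 1 →
      ∫ σ in (0 : ℝ)..δ,
          ‖((Real.log σ : ℂ) - π * I) ^ k - ((Real.log σ : ℂ) + π * I) ^ k‖ * σ ^ m * x ^ (-σ)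
        ≤ K * Real.log (Real.log x) ^ (k - 1) / Real.log x ^ (m + 1) := by
  set c : ℝ := 2 * π * k * 2 ^ (k - 1 - 1)
  set A : ℝ := (π + 1) ^ (k - 1) * Real.Gamma (m + 1)
  set B : ℝ := (2 * (k - 1 : ℕ)) ^ (k - 1) * Real.Gamma (m + 1 / 2)
  refine ⟨c * (A + B), by positivity, fun x δ hx hℓ hδ0 hδ1 => ?_⟩
  set L := Real.log x
  have hL0 : 0 < L := log_pos hx
  have hexp : ∀ σ : ℝ, x ^ (-σ) = rexp (-(L * σ)) := fun σ => by
    rw [rpow_def_of_pos (by linarith), mul_neg]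
  have hLa : L ^ ((m + 1 : ℝ)) = L ^ (m + 1) := by norm_cast
  have hLb : L ^ ((m + 1 / 2 : ℝ)) = L ^ (m + 1) * L ^ (-(1 / 2 : ℝ)) := by
    rw [← hLa, ← rpow_add hL0]; ring_nf
  have hℓn : 1 ≤ Real.log L ^ (k - 1) := one_le_pow₀ hℓ
  simp_rw [hexp]
  calc _ ≤ c * ((π + 1) * Real.log L) ^ (k - 1) * (Real.Gamma (m + 1) / L ^ ((m + 1 : ℝ))) +
        c * (2 * (k - 1 : ℕ)) ^ (k - 1) * L ^ (-(1 / 2 : ℝ)) *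
          (Real.Gamma (m + 1 / 2) / L ^ ((m + 1 / 2 : ℝ))) :=
        intervalIntegral_le_of_le_rpow_mul_exp_add hδ0 hL0 (by positivity) (by positivity)
          (by positivity) (by positivity) (fun σ hσ => by have := hσ.1; positivity)
          (fun σ hσ => norm_log_sub_pi_mul_I_pow_sub_mul_le k m hL0 hℓ hσ.1 (hσ.2.trans hδ1))
    _ = c * (A * Real.log L ^ (k - 1) + B) / L ^ (m + 1) := by
        rw [hLa, hLb, mul_pow]
        field_simp
        simp only [A, B]
        ring_nf
    _ ≤ c * ((A + B) * Real.log L ^ (k - 1)) / L ^ (m + 1) := by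
        gcongr
        nlinarith [show 0 ≤ B by positivity]
    _ = c * (A + B) * Real.log L ^ (k - 1) / L ^ (m + 1) := by ring

lemma exp_one_le_log_of_sixteen_le {x : ℝ} (hx : 16 ≤ x) : rexp 1 ≤ Real.log x := by
  have h16 : Real.log 16 = 4 * Real.log 2 := by
    rw [show (16 : ℝ) = 2 ^ 4 by norm_num, Real.log_pow]; norm_num
  have := Real.log_le_log (by norm_num) hx
  linarith [exp_one_lt_d9, log_two_gt_d9]

theorem hankel_horizontal_estimate_general (k m : ℕ) :
    ∃ C : ℝ, 0 < C ∧ ∀ x : ℝ, 16 ≤ x →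
      (∫ σ in (0:ℝ)..(1/10 : ℝ),
          ‖((Real.log σ : ℂ) - Real.pi * Complex.I) ^ k -
              ((Real.log σ : ℂ) + Real.pi * Complex.I) ^ k‖ * σ ^ m * x ^ (-σ))
        ≤ C * Real.log (Real.log x) ^ (k - 1) / Real.log x ^ (m + 1) := by
  obtain ⟨K, hK0, hK⟩ := exists_integral_norm_log_sub_pi_mul_I_pow_sub_mul_rpow_le k m
  refine ⟨K + 1, by linarith, fun x hx => ?_⟩
  have hlogx : rexp 1 ≤ Real.log x := exp_one_le_log_of_sixteen_le hx
  have hL0 : 0 < Real.log x := (exp_pos 1).trans_le hlogx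
  have hℓ : 1 ≤ Real.log (Real.log x) := (le_log_iff_exp_le hL0).mpr hlogx
  refine (hK x _ (by linarith) hℓ (by norm_num) (by norm_num)).trans ?_
  gcongr
  linarith

/-- **Lemma 5.1** (Meng): for `k ≥ 1`, `m ≥ 0` there is `C = C(m,k) > 0` such that for
all `x ≥ 16`, with `δ = 1/10`,
`∫₀^δ |(log σ - iπ)^k - (log σ + iπ)^k| σ^m x^{-σ} dσ ≤ C (log log x)^{k-1}/(log x)^{m+1}`. -/
theorem hankel_horizontal_estimate (k m : ℕ) (hk : 1 ≤ k) :
    ∃ C : ℝ, 0 < C ∧ ∀ x : ℝ, 16 ≤ x →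
      (∫ σ in (0:ℝ)..(1/10 : ℝ),
          ‖((Real.log σ : ℂ) - Real.pi * Complex.I) ^ k -
              ((Real.log σ : ℂ) + Real.pi * Complex.I) ^ k‖ * σ ^ m * x ^ (-σ))
        ≤ C * Real.log (Real.log x) ^ (k - 1) / Real.log x ^ (m + 1) :=
  hankel_horizontal_estimate_general k m
end

section
/- For every integer j ≥ 1 there is a constant C_j > 0 such that for all integers N ≥ 1, all real numbers δ₁, …, δ_N with 0 < |δ_n| ≤ 1 for each n, and every real x ≥ 16, with δ = 1/10: ∫₀^δ | Σ_{n=1}^{N} log(σ + iδ_n) |^j · x^{−σ} dσ ≤ (C_j / log x) · ( min(N · log log x, log(1/Δ_N)) + Nπ )^j, where Δ_N = ∏_{n=1}^{N} |δ_n|. -/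
/-!
Each term satisfies `‖log (σ + iδ)‖ ≤ log (1 / max σ |δ|) + π`, so the sum is bounded both by
`log (1 / Δ_N) + Nπ` and by `N (log (1/σ) + π)`. The weight `x^{-σ} = e^{-Lσ}`, `L = log x`, has
integral at most `1 / L`, which settles the first bound. For the second, substitute `u = Lσ`:
`log (1/σ) + π = (log L + π) + log (1/u)` and `log (1/u) ≤ (j+1) u^{-1/(j+1)}`, so the `j`-th
power is at most a constant times `(log L + π)^j (1 + u^{1/(j+1) - 1})`, and against `e^{-u}` both
terms integrate to Gamma values.
-/

open MeasureTheory Set Real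

theorem Complex.norm_log_le_abs_log_norm_add_pi_div_two {z : ℂ} (hz : 0 ≤ z.re) :
    ‖log z‖ ≤ |Real.log ‖z‖| + π / 2 :=
  calc ‖log z‖ ≤ |(log z).re| + |(log z).im| := norm_le_abs_re_add_abs_im _
    _ ≤ |Real.log ‖z‖| + π / 2 := by
      rw [log_re, log_im]
      gcongr
      exact abs_arg_le_pi_div_two_iff.2 hz

theorem Real.abs_log_le_neg_log_add {m r c : ℝ} (hm : 0 < m) (hm1 : m ≤ 1) (hmr : m ≤ r)
    (hrc : Real.log r ≤ c) (hc : 0 ≤ c) : |Real.log r| ≤ -Real.log m + c := by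
  have := Real.log_nonpos hm.le hm1
  have := Real.log_le_log hm hmr
  rw [abs_le]
  constructor <;> linarith

theorem Complex.norm_log_ofReal_add_mul_I_le {σ δ : ℝ} (hσ0 : 0 ≤ σ) (hσ1 : σ ≤ 1)
    (hδ0 : 0 < |δ|) (hδ1 : |δ| ≤ 1) :
    ‖log (σ + δ * I)‖ ≤ -Real.log (max σ |δ|) + π := by
  set z : ℂ := σ + δ * I
  have hre : z.re = σ := by simp [z]
  have him : z.im = δ := by simp [z]
  have hmax : max σ |δ| ≤ ‖z‖ :=
    max_le (hre ▸ (le_abs_self _).trans (abs_re_le_norm z)) (him ▸ abs_im_le_norm z)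
  have hz2 : ‖z‖ ≤ 2 := by
    have := norm_le_abs_re_add_abs_im z
    rw [hre, him, abs_of_nonneg hσ0] at this
    linarith
  have hlog : Real.log ‖z‖ ≤ π / 2 := by
    have := Real.log_le_sub_one_of_pos ((lt_max_of_lt_right hδ0).trans_le hmax)
    linarith [Real.pi_gt_three]
  calc ‖log z‖ ≤ |Real.log ‖z‖| + π / 2 := norm_log_le_abs_log_norm_add_pi_div_two (hre ▸ hσ0)
    _ ≤ -Real.log (max σ |δ|) + π / 2 + π / 2 := by
      gcongr
      exact Real.abs_log_le_neg_log_add (lt_max_of_lt_right hδ0) (max_le hσ1 hδ1) hmax hlog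
        (by positivity)
    _ = -Real.log (max σ |δ|) + π := by ring

section LogSum

open Complex

variable {ι : Type*} [Fintype ι] {d : ι → ℝ}

theorem norm_sum_log_le_sum_neg_log_max (hd : ∀ n, 0 < |d n| ∧ |d n| ≤ 1) {σ : ℝ} (hσ0 : 0 ≤ σ)
    (hσ1 : σ ≤ 1) :
    ‖∑ n, Complex.log (σ + d n * I)‖ ≤ ∑ n, -Real.log (max σ |d n|) + Fintype.card ι * π :=
  calc ‖∑ n, Complex.log (σ + d n * I)‖ ≤ ∑ n, ‖Complex.log (σ + d n * I)‖ := norm_sum_le _ _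
    _ ≤ ∑ n, (-Real.log (max σ |d n|) + π) := Finset.sum_le_sum fun n _ =>
      Complex.norm_log_ofReal_add_mul_I_le hσ0 hσ1 (hd n).1 (hd n).2
    _ = ∑ n, -Real.log (max σ |d n|) + Fintype.card ι * π := by
      simp [Finset.sum_add_distrib]

theorem norm_sum_log_le_log_one_div_prod (hd : ∀ n, 0 < |d n| ∧ |d n| ≤ 1) {σ : ℝ} (hσ0 : 0 ≤ σ)
    (hσ1 : σ ≤ 1) :
    ‖∑ n, Complex.log (σ + d n * I)‖ ≤ Real.log (1 / ∏ n, |d n|) + Fintype.card ι * π := by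
  refine (norm_sum_log_le_sum_neg_log_max hd hσ0 hσ1).trans ?_
  rw [one_div, Real.log_inv, Real.log_prod fun n _ => (hd n).1.ne', ← Finset.sum_neg_distrib]
  gcongr with n
  exacts [(hd n).1, le_max_right _ _]

theorem norm_sum_log_le_card_mul (hd : ∀ n, 0 < |d n| ∧ |d n| ≤ 1) {σ : ℝ} (hσ0 : 0 < σ)
    (hσ1 : σ ≤ 1) :
    ‖∑ n, Complex.log (σ + d n * I)‖ ≤ Fintype.card ι * (Real.log σ⁻¹ + π) := by
  refine (norm_sum_log_le_sum_neg_log_max hd hσ0.le hσ1).trans ?_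
  have : ∑ n, -Real.log (max σ |d n|) ≤ ∑ _n : ι, Real.log σ⁻¹ :=
    Finset.sum_le_sum fun n _ => by
      rw [Real.log_inv]
      exact neg_le_neg (Real.log_le_log hσ0 (le_max_left _ _))
  rw [Finset.sum_const, Finset.card_univ, nsmul_eq_mul] at this
  linarith

theorem log_one_div_prod_abs_nonneg (hd : ∀ n, 0 < |d n| ∧ |d n| ≤ 1) :
    0 ≤ Real.log (1 / ∏ n, |d n|) :=
  Real.log_nonneg <| one_le_one_div (Finset.prod_pos fun n _ => (hd n).1)
    (Finset.prod_le_one (fun _ _ => abs_nonneg _) fun n _ => (hd n).2)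

end LogSum

theorem intervalIntegral.integral_mono_on_Ioc_of_nonneg {f g : ℝ → ℝ} {a b : ℝ} (hab : a ≤ b)
    (hg : IntervalIntegrable g volume a b) (hf : ∀ σ ∈ Ioc a b, 0 ≤ f σ)
    (hfg : ∀ σ ∈ Ioc a b, f σ ≤ g σ) :
    ∫ σ in a..b, f σ ≤ ∫ σ in a..b, g σ := by
  rw [intervalIntegral.integral_of_le hab, intervalIntegral.integral_of_le hab]
  exact integral_mono_of_nonneg (ae_restrict_of_forall_mem measurableSet_Ioc hf) hg.1
    (ae_restrict_of_forall_mem measurableSet_Ioc hfg)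

section GammaBound

variable {s L b : ℝ}

theorem intervalIntegral_exp_neg_mul_rpow_le_Gamma (hs : 0 < s) (hb : 0 ≤ b) :
    ∫ u in 0..b, exp (-u) * u ^ (s - 1) ≤ Gamma s := by
  rw [intervalIntegral.integral_of_le hb, Gamma_eq_integral hs]
  refine setIntegral_mono_set (GammaIntegral_convergent hs) ?_
    Ioc_subset_Ioi_self.eventuallyLE
  filter_upwards [ae_restrict_mem measurableSet_Ioi] with u hu
  exact mul_nonneg (exp_pos _).le (rpow_nonneg (le_of_lt hu) _)

theorem intervalIntegrable_exp_neg_mul_mul_rpow (hs : 0 < s) (hL : 0 < L) (hb : 0 ≤ b) :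
    IntervalIntegrable (fun σ => exp (-(L * σ)) * (L * σ) ^ (s - 1)) volume 0 b := by
  have h : IntervalIntegrable (fun u => exp (-u) * u ^ (s - 1)) volume 0 (L * b) :=
    (intervalIntegrable_iff_integrableOn_Ioc_of_le (by positivity)).2
      ((GammaIntegral_convergent hs).mono_set Ioc_subset_Ioi_self)
  simpa [hL.ne'] using h.comp_mul_left (c := L)

theorem intervalIntegral_exp_neg_mul_mul_rpow_le (hs : 0 < s) (hL : 0 < L) (hb : 0 ≤ b) :
    ∫ σ in 0..b, exp (-(L * σ)) * (L * σ) ^ (s - 1) ≤ Gamma s / L := by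
  rw [intervalIntegral.integral_comp_mul_left (fun u => exp (-u) * u ^ (s - 1)) hL.ne',
    mul_zero, smul_eq_mul, div_eq_inv_mul]
  gcongr
  exact intervalIntegral_exp_neg_mul_rpow_le_Gamma hs (by positivity)

theorem intervalIntegral_exp_neg_mul_le (hL : 0 < L) (hb : 0 ≤ b) :
    ∫ σ in 0..b, exp (-(L * σ)) ≤ 1 / L := by
  simpa using intervalIntegral_exp_neg_mul_mul_rpow_le one_pos hL hb

end GammaBound

/-- The logarithmic singularity is dominated by an integrable power, through
`log u⁻¹ ≤ (j + 1) u^{-1/(j+1)}`. -/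
theorem pow_le_of_le_add_log_inv {y A u : ℝ} (j : ℕ) (hy : 0 ≤ y) (hA : 1 ≤ A) (hu : 0 < u)
    (hyA : y ≤ A + Real.log u⁻¹) :
    y ^ j ≤ (2 * A) ^ j * (1 + (j + 1) ^ j * u ^ (1 / (j + 1) - 1 : ℝ)) := by
  set ε : ℝ := 1 / (j + 1)
  have hε : 0 < ε := by positivity
  set w : ℝ := (j + 1) * u ^ (-ε)
  have hw : Real.log u⁻¹ ≤ w := by
    have := Real.log_le_rpow_div (inv_nonneg.2 hu.le) hε
    rw [inv_rpow hu.le, ← rpow_neg hu.le] at this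
    convert this using 1
    simp only [w, ε, div_eq_mul_inv, one_mul, inv_inv]
    ring
  have hwj : w ^ j = (j + 1) ^ j * u ^ (ε - 1) := by
    have hεj : ε * j + ε = 1 := by simp only [ε]; field_simp
    rw [mul_pow, ← rpow_natCast (u ^ (-ε)), ← rpow_mul hu.le]
    congr 2
    linarith
  calc y ^ j ≤ (A + w) ^ j := pow_le_pow_left₀ hy (hyA.trans (by linarith)) j
    _ ≤ 2 ^ (j - 1) * (A ^ j + w ^ j) := add_pow_le (by linarith) (by positivity) j
    _ ≤ 2 ^ j * (A ^ j + A ^ j * w ^ j) := by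
      gcongr 2 ^ ?_ * (_ + ?_)
      · exact one_le_two
      · exact Nat.sub_le j 1
      · exact le_mul_of_one_le_left (by positivity) (one_le_pow₀ hA)
    _ = (2 * A) ^ j * (1 + (j + 1) ^ j * u ^ (ε - 1)) := by rw [hwj]; ring

/-- `2^j (Γ(1) + (j+1)^j Γ(1/(j+1)))`, from the two terms of `pow_le_of_le_add_log_inv`. -/
noncomputable def logIntegralConst (j : ℕ) : ℝ :=
  2 ^ j * (1 + (j + 1) ^ j * Gamma (1 / (j + 1)))

theorem one_le_logIntegralConst (j : ℕ) : 1 ≤ logIntegralConst j := by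
  have := Gamma_pos_of_pos (s := 1 / (j + 1)) (by positivity)
  exact one_le_mul_of_one_le_of_one_le (one_le_pow₀ one_le_two)
    (le_add_of_nonneg_right (by positivity))

section WeightedIntegral

variable {F : ℝ → ℝ} {L b : ℝ}

theorem intervalIntegral_pow_mul_exp_neg_mul_le_of_le {M : ℝ} (j : ℕ) (hL : 0 < L) (hb : 0 ≤ b)
    (hM : 0 ≤ M) (hF0 : ∀ σ ∈ Ioc 0 b, 0 ≤ F σ) (hFM : ∀ σ ∈ Ioc 0 b, F σ ≤ M) :
    ∫ σ in 0..b, F σ ^ j * exp (-(L * σ)) ≤ M ^ j / L :=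
  calc ∫ σ in 0..b, F σ ^ j * exp (-(L * σ))
      ≤ ∫ σ in 0..b, M ^ j * exp (-(L * σ)) :=
        intervalIntegral.integral_mono_on_Ioc_of_nonneg hb
          ((continuous_exp.comp (by fun_prop)).intervalIntegrable _ _ |>.const_mul _)
          (fun σ hσ => by have := hF0 σ hσ; positivity)
          (fun σ hσ => by gcongr; exacts [hF0 σ hσ, hFM σ hσ])
    _ = M ^ j * ∫ σ in 0..b, exp (-(L * σ)) := intervalIntegral.integral_const_mul _ _
    _ ≤ M ^ j * (1 / L) := by gcongr; exact intervalIntegral_exp_neg_mul_le hL hb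
    _ = M ^ j / L := mul_one_div _ _

theorem intervalIntegral_pow_mul_exp_neg_mul_le_of_le_log {K a : ℝ} (j : ℕ) (hL : 0 < L)
    (hb0 : 0 ≤ b) (hb1 : b ≤ 1) (hK : 0 ≤ K) (ha : 0 ≤ a) (hA : 1 ≤ Real.log L + a)
    (hF0 : ∀ σ ∈ Ioc 0 b, 0 ≤ F σ) (hF : ∀ σ ∈ Ioc 0 b, F σ ≤ K * (Real.log σ⁻¹ + a)) :
    ∫ σ in 0..b, F σ ^ j * exp (-(L * σ)) ≤ logIntegralConst j / L * (K * (Real.log L + a)) ^ j := by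
  set s : ℝ := 1 / (j + 1)
  have hs : 0 < s := by positivity
  set c : ℝ := (2 * (K * (Real.log L + a))) ^ j
  have hmajor : ∀ σ ∈ Ioc 0 b, F σ ^ j * exp (-(L * σ)) ≤
      c * (exp (-(L * σ)) + (j + 1) ^ j * (exp (-(L * σ)) * (L * σ) ^ (s - 1))) := by
    intro σ hσ
    have hy : 0 ≤ Real.log σ⁻¹ + a :=
      add_nonneg (Real.log_nonneg (one_le_inv_iff₀.2 ⟨hσ.1, hσ.2.trans hb1⟩)) ha
    have hyA : Real.log σ⁻¹ + a ≤ Real.log L + a + Real.log (L * σ)⁻¹ := by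
      simp only [Real.log_inv, Real.log_mul hL.ne' hσ.1.ne']
      linarith
    have hpow := pow_le_of_le_add_log_inv j hy hA (mul_pos hL hσ.1) hyA
    calc F σ ^ j * exp (-(L * σ)) ≤ (K * (Real.log σ⁻¹ + a)) ^ j * exp (-(L * σ)) := by
          gcongr; exacts [hF0 σ hσ, hF σ hσ]
      _ = K ^ j * (Real.log σ⁻¹ + a) ^ j * exp (-(L * σ)) := by rw [mul_pow]
      _ ≤ K ^ j * ((2 * (Real.log L + a)) ^ j * (1 + (j + 1) ^ j * (L * σ) ^ (s - 1)))
            * exp (-(L * σ)) := by gcongr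
      _ = _ := by simp only [c, mul_pow]; ring
  have hexp : IntervalIntegrable (fun σ => exp (-(L * σ))) volume 0 b :=
    (continuous_exp.comp (by fun_prop)).intervalIntegrable _ _
  have hrpow := intervalIntegrable_exp_neg_mul_mul_rpow hs hL hb0
  calc ∫ σ in 0..b, F σ ^ j * exp (-(L * σ))
      ≤ ∫ σ in 0..b, c * (exp (-(L * σ)) + (j + 1) ^ j * (exp (-(L * σ)) * (L * σ) ^ (s - 1))) :=
        intervalIntegral.integral_mono_on_Ioc_of_nonneg hb0 ((hexp.add (hrpow.const_mul _)).const_mul _)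
          (fun σ hσ => by have := hF0 σ hσ; positivity) hmajor
    _ = c * ((∫ σ in 0..b, exp (-(L * σ))) +
          (j + 1) ^ j * ∫ σ in 0..b, exp (-(L * σ)) * (L * σ) ^ (s - 1)) := by
        rw [intervalIntegral.integral_const_mul, intervalIntegral.integral_add hexp
          (hrpow.const_mul _), intervalIntegral.integral_const_mul]
    _ ≤ c * (1 / L + (j + 1) ^ j * (Gamma s / L)) := by
        gcongr
        · exact intervalIntegral_exp_neg_mul_le hL hb0
        · exact intervalIntegral_exp_neg_mul_mul_rpow_le hs hL hb0
    _ = logIntegralConst j / L * (K * (Real.log L + a)) ^ j := by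
        simp only [c, logIntegralConst, s, mul_pow]
        ring

end WeightedIntegral

theorem log_sum_integral_estimate_general (j : ℕ) :
    ∃ C : ℝ, 0 < C ∧
      ∀ N : ℕ, 1 ≤ N → ∀ d : Fin N → ℝ, (∀ n, 0 < |d n| ∧ |d n| ≤ 1) →
        ∀ x : ℝ, 16 ≤ x →
          (∫ σ in (0:ℝ)..(1/10 : ℝ),
              ‖∑ n : Fin N, Complex.log ((σ : ℂ) + (d n : ℝ) * Complex.I)‖ ^ j * x ^ (-σ))
            ≤ (C / Real.log x) *
                (min ((N : ℝ) * Real.log (Real.log x)) (Real.log (1 / ∏ n : Fin N, |d n|))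
                  + (N : ℝ) * Real.pi) ^ j := by
  refine ⟨logIntegralConst j, one_pos.trans_le (one_le_logIntegralConst j),
    fun N _ d hd x hx => ?_⟩
  have hx0 : 0 < x := by linarith
  have hL : 1 ≤ Real.log x := by
    rw [Real.le_log_iff_exp_le hx0]
    linarith [Real.exp_one_lt_d9]
  have hle_one : ∀ σ ∈ Ioc (0 : ℝ) (1 / 10), σ ≤ 1 := fun σ hσ => hσ.2.trans (by norm_num)
  simp_rw [rpow_def_of_pos hx0, mul_neg]
  rcases le_total (Real.log (1 / ∏ n, |d n|)) (N * Real.log (Real.log x)) with h | h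
  · rw [min_eq_right h]
    have hM : 0 ≤ Real.log (1 / ∏ n, |d n|) + N * π :=
      add_nonneg (log_one_div_prod_abs_nonneg hd) (by positivity)
    calc _ ≤ (Real.log (1 / ∏ n, |d n|) + N * π) ^ j / Real.log x :=
          intervalIntegral_pow_mul_exp_neg_mul_le_of_le j (by positivity) (by norm_num) hM
            (fun σ _ => norm_nonneg _) fun σ hσ => by
              simpa using norm_sum_log_le_log_one_div_prod hd hσ.1.le (hle_one σ hσ)
      _ ≤ _ := by
          rw [div_mul_eq_mul_div]
          gcongr
          exact le_mul_of_one_le_left (by positivity) (one_le_logIntegralConst j)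
  · rw [min_eq_left h, ← mul_add]
    exact intervalIntegral_pow_mul_exp_neg_mul_le_of_le_log j (by positivity) (by norm_num)
      (by norm_num) (Nat.cast_nonneg N) pi_pos.le
      (by linarith [Real.log_nonneg hL, pi_gt_three]) (fun σ _ => norm_nonneg _) fun σ hσ => by
        simpa using norm_sum_log_le_card_mul hd hσ.1 (hle_one σ hσ)

/-- **Lemma 6.3** (Meng): for every `j ≥ 1` there is `C_j > 0` such that for all `N ≥ 1`,
all `δ₁, …, δ_N` with `0 < |δ_n| ≤ 1`, and all `x ≥ 16`, with `δ = 1/10`,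
`∫₀^δ |∑_{n=1}^N log(σ + iδ_n)|^j x^{-σ} dσ
  ≤ (C_j / log x) (min(N log log x, log(1/Δ_N)) + Nπ)^j`, where `Δ_N = ∏ |δ_n|`. -/
theorem log_sum_integral_estimate (j : ℕ) (hj : 1 ≤ j) :
    ∃ C : ℝ, 0 < C ∧
      ∀ N : ℕ, 1 ≤ N → ∀ d : Fin N → ℝ, (∀ n, 0 < |d n| ∧ |d n| ≤ 1) →
        ∀ x : ℝ, 16 ≤ x →
          (∫ σ in (0:ℝ)..(1/10 : ℝ),
              ‖∑ n : Fin N, Complex.log ((σ : ℂ) + (d n : ℝ) * Complex.I)‖ ^ j * x ^ (-σ))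
            ≤ (C / Real.log x) *
                (min ((N : ℝ) * Real.log (Real.log x)) (Real.log (1 / ∏ n : Fin N, |d n|))
                  + (N : ℝ) * Real.pi) ^ j :=
  log_sum_integral_estimate_general j
end

section
/- Let A and B be disjoint finite sets with |A| < |B|. For an integer k ≥ 1, let d_k be the number of multisets of size k with elements drawn from A ∪ B that contain an even number of elements of B (counted with multiplicity) minus the number of such multisets that contain an odd number of elements of B; equivalently, d_k = Σ_{j=0}^{k} (−1)^j · binom(|A| + (k − j) − 1, k − j) · binom(|B| + j − 1, j). Then (−1)^k · d_k > 0 for every k ≥ 1. -/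
/-!
With `a = |A|` and `b = |B|`, the number `(-1)^k d_k` is the coefficient of `X^k` in
`(1 + X)^(-a) (1 - X)^(-b)`. Writing `b = a + c + 1`, this series factors as
`((1 + X)(1 - X))^(-a) (1 - X)^(-(c + 1))`. The first factor is a power of
`1/(1 - X^2) = ∑ X^(2n)`, so it has nonnegative coefficients and constant coefficient `1`,
while the second has the positive coefficients `binom(c + n, n)`.
-/

open Finset

namespace PowerSeries

section Ordered

variable {R : Type*} [CommSemiring R] [PartialOrder R] [IsOrderedRing R] {f g : R⟦X⟧}

theorem coeff_mul_nonneg (hf : ∀ n, 0 ≤ coeff n f) (hg : ∀ n, 0 ≤ coeff n g) (n : ℕ) :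
    0 ≤ coeff n (f * g) := by
  rw [coeff_mul]
  exact sum_nonneg fun p _ => mul_nonneg (hf p.1) (hg p.2)

theorem coeff_pow_nonneg (hf : ∀ n, 0 ≤ coeff n f) (m n : ℕ) : 0 ≤ coeff n (f ^ m) := by
  induction m generalizing n with
  | zero => rw [pow_zero, coeff_one]; split_ifs <;> simp
  | succ m ih => rw [pow_succ]; exact coeff_mul_nonneg ih hf n

theorem constantCoeff_mul_coeff_le_coeff_mul (hf : ∀ n, 0 ≤ coeff n f)
    (hg : ∀ n, 0 ≤ coeff n g) (n : ℕ) : constantCoeff f * coeff n g ≤ coeff n (f * g) := by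
  rw [coeff_mul, ← coeff_zero_eq_constantCoeff_apply]
  exact single_le_sum (f := fun p => coeff p.1 f * coeff p.2 g) (a := (0, n))
    (fun p _ => mul_nonneg (hf p.1) (hg p.2)) (mem_antidiagonal.mpr (zero_add n))

end Ordered

section

variable (S : Type*) [CommRing S]

theorem coeff_invOneSubPow (d n : ℕ) :
    coeff n (invOneSubPow S d : S⟦X⟧) = (d + n - 1).choose n := by
  cases d with
  | zero => cases n <;> simp [invOneSubPow_zero, coeff_one]
  | succ d =>
    simp [invOneSubPow_val_succ_eq_mk_add_choose, add_right_comm d 1 n, Nat.choose_symm_add]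

theorem invOneSubPow_eq_pow (d : ℕ) : invOneSubPow S d = invOneSubPow S 1 ^ d := by
  rw [invOneSubPow_eq_inv_one_sub_pow, invOneSubPow_eq_inv_one_sub_pow, pow_one]

theorem coeff_rescale_neg_one_invOneSubPow_one_mul (n : ℕ) :
    coeff n (rescale (-1 : S) (invOneSubPow S 1 : S⟦X⟧) * (invOneSubPow S 1 : S⟦X⟧)) =
      if Even (n + 1) then 0 else 1 := by
  simp [coeff_mul, coeff_invOneSubPow, Nat.sum_antidiagonal_eq_sum_range_succ_mk, neg_one_geom_sum]

theorem coeff_rescale_neg_one_invOneSubPow_mul_invOneSubPow (a b k : ℕ) :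
    coeff k (rescale (-1 : S) (invOneSubPow S a : S⟦X⟧) * (invOneSubPow S b : S⟦X⟧)) =
      (-1 : S) ^ k * ∑ j ∈ range (k + 1),
        (-1 : S) ^ j * ((a + (k - j) - 1).choose (k - j) : S) * ((b + j - 1).choose j : S) := by
  rw [mul_comm, coeff_mul, Nat.sum_antidiagonal_eq_sum_range_succ
    (fun j i => coeff j (invOneSubPow S b : S⟦X⟧) * coeff i (rescale (-1 : S) _)), mul_sum]
  refine sum_congr rfl fun j hj => ?_
  have hsplit : (-1 : S) ^ k = (-1) ^ (k - j) * (-1) ^ j := by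
    rw [← pow_add, Nat.sub_add_cancel (Nat.lt_succ_iff.mp (mem_range.mp hj))]
  have hsq : (-1 : S) ^ j * (-1) ^ j = 1 := by rw [← mul_pow, neg_one_mul, neg_neg, one_pow]
  simp only [coeff_rescale, coeff_invOneSubPow, hsplit]
  linear_combination -(-1 : S) ^ (k - j) * ((a + (k - j) - 1).choose (k - j) : S) *
    ((b + j - 1).choose j : S) * hsq

end

theorem coeff_rescale_neg_one_invOneSubPow_mul_invOneSubPow_pos {S : Type*} [CommRing S]
    [PartialOrder S] [IsStrictOrderedRing S] {a b : ℕ} (hab : a < b) (n : ℕ) :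
    0 < coeff n
      (rescale (-1 : S) (invOneSubPow S a : S⟦X⟧) * (invOneSubPow S b : S⟦X⟧)) := by
  obtain ⟨c, rfl⟩ : ∃ c, b = a + (c + 1) := ⟨b - a - 1, by omega⟩
  set E := rescale (-1 : S) (invOneSubPow S 1 : S⟦X⟧) * (invOneSubPow S 1 : S⟦X⟧)
  have hsplit : rescale (-1 : S) (invOneSubPow S a : S⟦X⟧) *
      (invOneSubPow S (a + (c + 1)) : S⟦X⟧) = E ^ a * (invOneSubPow S (c + 1) : S⟦X⟧) := by
    rw [invOneSubPow_add, Units.val_mul, invOneSubPow_eq_pow S a, Units.val_pow_eq_pow_val,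
      map_pow, mul_pow, mul_assoc]
  have hE : ∀ m, 0 ≤ coeff m E := fun m => by
    rw [coeff_rescale_neg_one_invOneSubPow_one_mul]; split_ifs <;> simp
  have hE0 : constantCoeff (E ^ a) = 1 := by
    rw [map_pow, ← coeff_zero_eq_constantCoeff_apply,
      coeff_rescale_neg_one_invOneSubPow_one_mul]
    simp
  have hU : ∀ m, 0 < coeff m (invOneSubPow S (c + 1) : S⟦X⟧) := fun m => by
    rw [coeff_invOneSubPow]; exact Nat.cast_pos.mpr (Nat.choose_pos (by omega))
  calc 0 < constantCoeff (E ^ a) * coeff n (invOneSubPow S (c + 1) : S⟦X⟧) := by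
        rw [hE0, one_mul]; exact hU n
    _ ≤ _ := by
      rw [hsplit]
      exact constantCoeff_mul_coeff_le_coeff_mul (coeff_pow_nonneg hE a) (fun m => (hU m).le) n

end PowerSeries

open PowerSeries in
theorem alternating_multiset_count_pos_general {α : Type*} (A B : Finset α)
    (hcard : A.card < B.card) (k : ℕ) :
    0 < (-1 : ℤ) ^ k *
        ∑ j ∈ Finset.range (k + 1),
          (-1 : ℤ) ^ j * ((A.card + (k - j) - 1).choose (k - j) : ℤ) *
            ((B.card + j - 1).choose j : ℤ) := by
  rw [← coeff_rescale_neg_one_invOneSubPow_mul_invOneSubPow]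
  exact coeff_rescale_neg_one_invOneSubPow_mul_invOneSubPow_pos hcard k

/-- **Combinatorial bias lemma** (cf. Meng, §2.4): if `A` and `B` are disjoint finite sets
with `|A| < |B|`, and `d_k` is the signed count of multisets of size `k` from `A ∪ B`
(counted `+1` when the number of elements from `B`, with multiplicity, is even, `-1` when
odd), i.e. `d_k = ∑_{j=0}^k (-1)^j C(|A|+(k-j)-1, k-j) C(|B|+j-1, j)`, then
`(-1)^k d_k > 0` for all `k ≥ 1`. -/
theorem alternating_multiset_count_pos {α : Type*} [DecidableEq α] (A B : Finset α)
    (hdisj : Disjoint A B) (hcard : A.card < B.card) (k : ℕ) (hk : 1 ≤ k) :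
    0 < (-1 : ℤ) ^ k *
        ∑ j ∈ Finset.range (k + 1),
          (-1 : ℤ) ^ j * ((A.card + (k - j) - 1).choose (k - j) : ℤ) *
            ((B.card + j - 1).choose j : ℤ) :=
  alternating_multiset_count_pos_general A B hcard k
end
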